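/- arXiv:2202.14037 — 7 statements merged into one kernel-verified Lean document; each statement's English description precedes it below -/
import Mathlib

section
/- For every representation f : X → ℝ^d with normalized matrix F_n, the spectral contrastive loss is a matrix factorization objective: L_spec(f) = ‖A_n − F_n F_nᵀ‖_F² − ‖A_n‖_F². -/
open Matrix Finset

variable {Xb X : Type*} [Fintype Xb] [Fintype X] [DecidableEq Xb] [DecidableEq X]

/-- Marginal probability `w(x) = ∑_{x̄} w(x̄)·w(x|x̄)` of an augmentation. -/
noncomputable def wX (wb : Xb → ℝ) (wc : Xb → X → ℝ) (x : X) : ℝ := ∑ xb, wb xb * wc xb x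

/-- Input–augmentation joint matrix `Ā[x̄,x] = w(x̄,x)`. -/
noncomputable def Abar (wb : Xb → ℝ) (wc : Xb → X → ℝ) : Matrix Xb X ℝ :=
  Matrix.of fun xb x => wb xb * wc xb x

/-- Normalized input–augmentation matrix `Ā_n = D̄^{-1/2} Ā D^{-1/2}`. -/
noncomputable def AbarN (wb : Xb → ℝ) (wc : Xb → X → ℝ) : Matrix Xb X ℝ :=
  (Matrix.diagonal fun xb => (Real.sqrt (wb xb))⁻¹) * Abar wb wc *
    (Matrix.diagonal fun x => (Real.sqrt (wX wb wc x))⁻¹)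

/-- Similarity matrix `A[x,x'] = w(x,x')`. -/
noncomputable def Amat (wb : Xb → ℝ) (wc : Xb → X → ℝ) : Matrix X X ℝ :=
  Matrix.of fun x x' => ∑ xb, wb xb * wc xb x * wc xb x'

/-- Normalized similarity matrix `A_n = D^{-1/2} A D^{-1/2}`. -/
noncomputable def AN (wb : Xb → ℝ) (wc : Xb → X → ℝ) : Matrix X X ℝ :=
  (Matrix.diagonal fun x => (Real.sqrt (wX wb wc x))⁻¹) * Amat wb wc *
    (Matrix.diagonal fun x => (Real.sqrt (wX wb wc x))⁻¹)

/-- Normalized matrix of a map `f` w.r.t. weights `w`: rows `√(w x) · f x`. -/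
noncomputable def Nmat {ι : Type*} (w : X → ℝ) (f : X → ι → ℝ) : Matrix X ι ℝ :=
  Matrix.of fun x i => Real.sqrt (w x) * f x i

/-- `P` is the orthogonal projection onto the column space of `B`. -/
def IsProjOnto {n m : Type*} [Fintype n] [Fintype m]
    (P : Matrix n n ℝ) (B : Matrix n m ℝ) : Prop :=
  P.IsSymm ∧ P * P = P ∧ LinearMap.range P.mulVecLin = LinearMap.range B.mulVecLin

/-- Squared Frobenius norm. -/
noncomputable def frobSq {n m : Type*} [Fintype n] [Fintype m] (M : Matrix n m ℝ) : ℝ :=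
  ∑ i, ∑ j, M i j ^ 2

/-- Spectral contrastive loss. -/
noncomputable def Lspec {d : ℕ} (wb : Xb → ℝ) (wc : Xb → X → ℝ) (f : X → Fin d → ℝ) : ℝ :=
  -2 * ∑ x, ∑ x', (∑ xb, wb xb * wc xb x * wc xb x') * (∑ i, f x i * f x' i)
    + ∑ x, ∑ x', wX wb wc x * wX wb wc x' * (∑ i, f x i * f x' i) ^ 2

/-- Augmentation-averaged representation `f̄(x̄) = ∑_x w(x|x̄) f(x)`. -/
noncomputable def fbar {ι : Type*} (wc : Xb → X → ℝ) (f : X → ι → ℝ) (xb : Xb) (i : ι) : ℝ :=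
  ∑ x, wc xb x * f x i

/-- Downstream classification loss. -/
noncomputable def Lclf {d : ℕ} (wb : Xb → ℝ) (wc : Xb → X → ℝ) (f : X → Fin d → ℝ)
    (ystar : Xb → ℝ) : ℝ :=
  ⨅ v : Fin d → ℝ,
    ∑ xb, wb xb * (if ystar xb * (∑ i, v i * fbar wc f xb i) < 0 then (1 : ℝ) else 0)

/-- Regression loss of features `φ` on a target `g` over augmentations. -/
noncomputable def LregPhi {ι : Type*} [Fintype ι] (w : X → ℝ) (φ : X → ι → ℝ) (g : X → ℝ) : ℝ :=
  ⨅ v : ι → ℝ, ∑ x, w x * ((∑ i, v i * φ x i) - g x) ^ 2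

/-- Inconsistency `Δ(g, y*)`. -/
noncomputable def Delta (wb : Xb → ℝ) (wc : Xb → X → ℝ) (g : X → ℝ) (ystar : Xb → ℝ) : ℝ :=
  ∑ xb, wb xb * ∑ x, wc xb x * (if g x ≠ ystar xb then (1 : ℝ) else 0)

/-- Feature covariance `Σ(φ) = ∑_x w(x)·φ(x)φ(x)ᵀ`. -/
noncomputable def SigmaPhi {ι : Type*} [Fintype ι] (w : X → ℝ) (φ : X → ι → ℝ) :
    Matrix ι ι ℝ :=
  Matrix.of fun i j => ∑ x, w x * φ x i * φ x j

/-- Averaged-feature covariance `Σ(φ̄) = ∑_{x̄} w(x̄)·φ̄(x̄)φ̄(x̄)ᵀ`. -/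
noncomputable def SigmaBar {ι : Type*} [Fintype ι] (wb : Xb → ℝ) (wc : Xb → X → ℝ)
    (φ : X → ι → ℝ) : Matrix ι ι ℝ :=
  Matrix.of fun i j => ∑ xb, wb xb * fbar wc φ xb i * fbar wc φ xb j

/-- `L_spec(f) = ‖A_n − F_n F_nᵀ‖_F² − ‖A_n‖_F²`. -/
theorem Lspec_eq_matrix_factorization {d : ℕ} [Nonempty Xb] [Nonempty X]
    (wb : Xb → ℝ) (wc : Xb → X → ℝ)
    (hwb : ∀ xb, 0 < wb xb) (hwbsum : ∑ xb, wb xb = 1)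
    (hwc : ∀ xb x, 0 ≤ wc xb x) (hwcsum : ∀ xb, ∑ x, wc xb x = 1)
    (hwx : ∀ x, 0 < wX wb wc x)
    (f : X → Fin d → ℝ) :
    Lspec wb wc f
      = frobSq (AN wb wc - Nmat (wX wb wc) f * (Nmat (wX wb wc) f)ᵀ) - frobSq (AN wb wc) := by
  classical
  set w := wX wb wc with hw
  set B := Nmat w f * (Nmat w f)ᵀ with hBdef
  have hB : ∀ x x', B x x'
      = Real.sqrt (w x) * Real.sqrt (w x') * ∑ i, f x i * f x' i := by
    intro x x'
    simp only [hBdef, Matrix.mul_apply, Nmat, Matrix.transpose_apply, Matrix.of_apply,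
      Finset.mul_sum]
    exact Finset.sum_congr rfl fun i _ => by ring
  have hA : ∀ x x', AN wb wc x x'
      = (Real.sqrt (w x))⁻¹ * (∑ xb, wb xb * wc xb x * wc xb x') * (Real.sqrt (w x'))⁻¹ := by
    intro x x'
    simp [AN, Amat, Matrix.diagonal_mul, Matrix.mul_diagonal, hw]
  have key : ∀ x x', (AN wb wc - B) x x' ^ 2 - (AN wb wc x x') ^ 2
      = -2 * ((∑ xb, wb xb * wc xb x * wc xb x') * (∑ i, f x i * f x' i))
        + w x * w x' * (∑ i, f x i * f x' i) ^ 2 := by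
    intro x x'
    have hs : Real.sqrt (w x) ≠ 0 := (Real.sqrt_pos.mpr (hwx x)).ne'
    have hs' : Real.sqrt (w x') ≠ 0 := (Real.sqrt_pos.mpr (hwx x')).ne'
    have h1 : Real.sqrt (w x) * Real.sqrt (w x) = w x := Real.mul_self_sqrt (hwx x).le
    have h2 : Real.sqrt (w x') * Real.sqrt (w x') = w x' := Real.mul_self_sqrt (hwx x').le
    rw [Matrix.sub_apply, hA, hB]
    generalize hga : Real.sqrt (w x) = a at h1 hs
    generalize hgb : Real.sqrt (w x') = b at h2 hs'
    rw [← h1, ← h2]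
    field_simp
    ring
  have hsum : frobSq (AN wb wc - B) - frobSq (AN wb wc)
      = ∑ x, ∑ x', ((AN wb wc - B) x x' ^ 2 - (AN wb wc x x') ^ 2) := by
    simp [frobSq, Finset.sum_sub_distrib]
  rw [hsum]
  simp only [Lspec]
  rw [Finset.sum_congr rfl fun x _ => Finset.sum_congr rfl fun x' _ => key x x']
  rw [Finset.sum_congr rfl fun x (_ : x ∈ Finset.univ) => Finset.sum_add_distrib,
    Finset.sum_add_distrib]
  congr 1
  rw [Finset.mul_sum]
  refine Finset.sum_congr rfl fun x _ => ?_
  rw [Finset.mul_sum]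
end

section
/- For a representation constrained to the linear class over fixed features, the spectral contrastive loss is factorization of the projected adjacency matrix: for every W ∈ ℝ^{D×d}, setting f(x) = Wᵀφ(x) with normalized matrix F_n, one has L_spec(f) = ‖P_{Φ_n} A_n P_{Φ_n} − F_n F_nᵀ‖_F² + C, where C = ‖P_{Φ_n} A_n P⊥_{Φ_n}‖_F² + ‖P⊥_{Φ_n} A_n P_{Φ_n}‖_F² + ‖P⊥_{Φ_n} A_n P⊥_{Φ_n}‖_F² − ‖A_n‖_F² does not depend on W. -/
open Matrix Finset

variable {Xb X : Type*} [Fintype Xb] [Fintype X] [DecidableEq Xb] [DecidableEq X]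

lemma frobSqT {n m : Type*} [Fintype n] [Fintype m] (M : Matrix n m ℝ) :
    frobSq M = (Mᵀ * M).trace := by
  rw [frobSq, Finset.sum_comm]
  simp [Matrix.trace, Matrix.diag, Matrix.mul_apply, sq]

lemma frob_sandwich {n : Type*} [Fintype n] (A B M : Matrix n n ℝ)
    (hA : Aᵀ = A) (hA2 : A * A = A) (hB : Bᵀ = B) (hB2 : B * B = B) :
    frobSq (A * M * B) = (Mᵀ * A * M * B).trace := by
  rw [frobSqT, Matrix.transpose_mul, Matrix.transpose_mul, hA, hB]
  simp only [← Matrix.mul_assoc]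
  rw [Matrix.mul_assoc (B * Mᵀ) A A, hA2]
  simp only [Matrix.mul_assoc]
  rw [Matrix.trace_mul_comm]
  simp only [Matrix.mul_assoc]
  rw [hB2]

lemma frob_split {n : Type*} [Fintype n] [DecidableEq n] (P M : Matrix n n ℝ)
    (hs : Pᵀ = P) (hi : P * P = P) :
    frobSq M = frobSq (P * M * P) + frobSq (P * M * (1 - P))
      + frobSq ((1 - P) * M * P) + frobSq ((1 - P) * M * (1 - P)) := by
  have hqs : (1 - P)ᵀ = 1 - P := by rw [Matrix.transpose_sub, Matrix.transpose_one, hs]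
  have hqi : (1 - P) * (1 - P) = 1 - P := by
    rw [Matrix.sub_mul, Matrix.one_mul, Matrix.mul_sub, Matrix.mul_one, hi]
    abel
  rw [frob_sandwich P P M hs hi hs hi, frob_sandwich P (1-P) M hs hi hqs hqi,
    frob_sandwich (1-P) P M hqs hqi hs hi, frob_sandwich (1-P) (1-P) M hqs hqi hqs hqi,
    frobSqT]
  simp only [Matrix.mul_sub, Matrix.sub_mul, Matrix.mul_one, Matrix.one_mul,
    Matrix.trace_sub]
  ring

lemma proj_fix {n m : Type*} [Fintype n] [Fintype m] [DecidableEq n] [DecidableEq m]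
    (P : Matrix n n ℝ) (B : Matrix n m ℝ) (hP : IsProjOnto P B) : P * B = B := by
  obtain ⟨-, hPP, hr⟩ := hP
  ext i j
  have hmem : B *ᵥ Pi.single j 1 ∈ LinearMap.range P.mulVecLin := by
    rw [hr]; exact ⟨Pi.single j 1, rfl⟩
  obtain ⟨u, hu⟩ := hmem
  have : P *ᵥ (B *ᵥ Pi.single j 1) = B *ᵥ Pi.single j 1 := by
    rw [← hu]
    show P *ᵥ (P *ᵥ u) = P *ᵥ u
    rw [Matrix.mulVec_mulVec, hPP]
  have h2 := congrFun this i
  simp only [Matrix.mulVec, dotProduct, Pi.single_apply, mul_ite, mul_one, mul_zero,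
    Finset.sum_ite_eq, Finset.sum_ite_eq', Finset.mem_univ, if_true] at h2
  simpa [Matrix.mul_apply] using h2

/-- for `f ∈ F_φ`, `L_spec(f) = ‖P_{Φ_n} A_n P_{Φ_n} − F_n F_nᵀ‖_F² + C`,
with `C` independent of `W`. -/
theorem Lspec_constrained_factorization {D d : ℕ} [Nonempty Xb] [Nonempty X]
    (wb : Xb → ℝ) (wc : Xb → X → ℝ)
    (hwb : ∀ xb, 0 < wb xb) (hwbsum : ∑ xb, wb xb = 1)
    (hwc : ∀ xb x, 0 ≤ wc xb x) (hwcsum : ∀ xb, ∑ x, wc xb x = 1)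
    (hwx : ∀ x, 0 < wX wb wc x)
    (φ : X → Fin D → ℝ)
    (P : Matrix X X ℝ) (hP : IsProjOnto P (Nmat (wX wb wc) φ))
    (W : Matrix (Fin D) (Fin d) ℝ) (f : X → Fin d → ℝ)
    (hf : ∀ x i, f x i = ∑ j, W j i * φ x j) :
    Lspec wb wc f
      = frobSq (P * AN wb wc * P - Nmat (wX wb wc) f * (Nmat (wX wb wc) f)ᵀ)
        + (frobSq (P * AN wb wc * (1 - P)) + frobSq ((1 - P) * AN wb wc * P)
            + frobSq ((1 - P) * AN wb wc * (1 - P)) - frobSq (AN wb wc)) := by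
  set w := wX wb wc with hw
  set An := AN wb wc with hAn
  set F := Nmat w f with hFdef
  obtain ⟨hPsymm, hPidem, hPrange⟩ := hP
  have hPsymm' : Pᵀ = P := hPsymm
  -- F = Φn * W
  have hF : F = Nmat w φ * W := by
    ext x i
    simp only [hFdef, Nmat, Matrix.of_apply, Matrix.mul_apply, hf, Finset.mul_sum]
    exact Finset.sum_congr rfl fun j _ => by ring
  have hPF : P * F = F := by
    rw [hF, ← Matrix.mul_assoc, proj_fix P (Nmat w φ) ⟨hPsymm, hPidem, hPrange⟩]
  have hFT : Fᵀ * P = Fᵀ := by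
    rw [← hPsymm', ← Matrix.transpose_mul, hPF]
  have hPFF : P * (F * Fᵀ) = F * Fᵀ := by rw [← Matrix.mul_assoc, hPF]
  have hFFP : (F * Fᵀ) * P = F * Fᵀ := by rw [Matrix.mul_assoc, hFT]
  -- key identity: Lspec = ‖An - F Fᵀ‖² - ‖An‖²
  have key : Lspec wb wc f = frobSq (An - F * Fᵀ) - frobSq An := by
    rw [Lspec, frobSq, frobSq, ← Finset.sum_sub_distrib]
    simp only [← hw]
    rw [Finset.mul_sum, ← Finset.sum_add_distrib]
    refine Finset.sum_congr rfl fun x _ => ?_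
    rw [Finset.mul_sum, ← Finset.sum_add_distrib, ← Finset.sum_sub_distrib]
    refine Finset.sum_congr rfl fun x' _ => ?_
    have hx := hwx x
    have hx' := hwx x'
    have hsx : Real.sqrt (w x) * (Real.sqrt (w x))⁻¹ = 1 :=
      mul_inv_cancel₀ (Real.sqrt_ne_zero'.2 hx)
    have hsx' : Real.sqrt (w x') * (Real.sqrt (w x'))⁻¹ = 1 :=
      mul_inv_cancel₀ (Real.sqrt_ne_zero'.2 hx')
    have hsq : Real.sqrt (w x) ^ 2 = w x := Real.sq_sqrt hx.le
    have hsq' : Real.sqrt (w x') ^ 2 = w x' := Real.sq_sqrt hx'.le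
    have hAne : An x x' = (Real.sqrt (w x))⁻¹ * Amat wb wc x x' * (Real.sqrt (w x'))⁻¹ := by
      rw [hAn, AN, Matrix.mul_diagonal, Matrix.diagonal_mul, ← hw]
    have hFFe : (F * Fᵀ) x x'
        = Real.sqrt (w x) * Real.sqrt (w x') * ∑ i, f x i * f x' i := by
      simp only [Matrix.mul_apply, Matrix.transpose_apply, hFdef, Nmat, Matrix.of_apply,
        Finset.mul_sum]
      exact Finset.sum_congr rfl fun i _ => by ring
    rw [Matrix.sub_apply, hAne, hFFe]
    simp only [Amat, Matrix.of_apply]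
    linear_combination
      (-((∑ i, f x i * f x' i) ^ 2) * Real.sqrt (w x') ^ 2) * hsq
      + (-((∑ i, f x i * f x' i) ^ 2) * w x) * hsq'
      + (2 * (∑ xb, wb xb * wc xb x * wc xb x') * (∑ i, f x i * f x' i)
          * (Real.sqrt (w x') * (Real.sqrt (w x'))⁻¹)) * hsx
      + (2 * (∑ xb, wb xb * wc xb x * wc xb x') * (∑ i, f x i * f x' i)) * hsx'
  rw [key, frob_split P (An - F * Fᵀ) hPsymm' hPidem]
  have h1 : P * (An - F * Fᵀ) * P = P * An * P - F * Fᵀ := by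
    simp only [Matrix.mul_sub, Matrix.sub_mul, Matrix.mul_one, Matrix.one_mul, hPFF, hFFP]
  have h2 : P * (An - F * Fᵀ) * (1 - P) = P * An * (1 - P) := by
    simp only [Matrix.mul_sub, Matrix.sub_mul, Matrix.mul_one, Matrix.one_mul, hPFF, hFFP]
    abel
  have h3 : (1 - P) * (An - F * Fᵀ) * P = (1 - P) * An * P := by
    simp only [Matrix.mul_sub, Matrix.sub_mul, Matrix.mul_one, Matrix.one_mul, hPFF, hFFP]
    abel
  have h4 : (1 - P) * (An - F * Fᵀ) * (1 - P) = (1 - P) * An * (1 - P) := by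
    simp only [Matrix.mul_sub, Matrix.sub_mul, Matrix.mul_one, Matrix.one_mul, hPFF, hFFP]
    abel
  rw [h1, h2, h3, h4]
  ring
end

section
/- For any g : X → {±1} and y* : X̄ → {±1}, the bilinear form of the normalized label vectors through the normalized augmentation matrix computes the inconsistency: y*_nᵀ Ā_n g_n = 1 − 2·Δ(g, y*). -/
open Matrix Finset

variable {Xb X : Type*} [Fintype Xb] [Fintype X] [DecidableEq Xb] [DecidableEq X]

/-- `y*_nᵀ Ā_n g_n = 1 − 2·Δ(g, y*)`. -/
theorem bilinear_form_eq_inconsistency [Nonempty Xb] [Nonempty X]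
    (wb : Xb → ℝ) (wc : Xb → X → ℝ)
    (hwb : ∀ xb, 0 < wb xb) (hwbsum : ∑ xb, wb xb = 1)
    (hwc : ∀ xb x, 0 ≤ wc xb x) (hwcsum : ∀ xb, ∑ x, wc xb x = 1)
    (hwx : ∀ x, 0 < wX wb wc x)
    (g : X → ℝ) (ystar : Xb → ℝ)
    (hg : ∀ x, g x = 1 ∨ g x = -1) (hy : ∀ xb, ystar xb = 1 ∨ ystar xb = -1) :
    (fun xb => Real.sqrt (wb xb) * ystar xb) ⬝ᵥ
        (AbarN wb wc).mulVec (fun x => Real.sqrt (wX wb wc x) * g x)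
      = 1 - 2 * Delta wb wc g ystar := by
  have key : ∀ xb x, Real.sqrt (wb xb) * ystar xb *
      (AbarN wb wc xb x * (Real.sqrt (wX wb wc x) * g x))
      = wb xb * wc xb x * (1 - 2 * (if g x ≠ ystar xb then (1:ℝ) else 0)) := by
    intro xb x
    have h1 : Real.sqrt (wb xb) ≠ 0 := ne_of_gt (Real.sqrt_pos.2 (hwb xb))
    have h2 : Real.sqrt (wX wb wc x) ≠ 0 := ne_of_gt (Real.sqrt_pos.2 (hwx x))
    have hyg : ystar xb * g x = 1 - 2 * (if g x ≠ ystar xb then (1:ℝ) else 0) := by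
      rcases hg x with h | h <;> rcases hy xb with h' | h' <;> simp [h, h'] <;> norm_num
    have : Real.sqrt (wb xb) * ystar xb *
        (AbarN wb wc xb x * (Real.sqrt (wX wb wc x) * g x))
        = wb xb * wc xb x * (ystar xb * g x) := by
      simp only [AbarN, Matrix.mul_diagonal, Matrix.diagonal_mul, Abar, Matrix.of_apply]
      field_simp
    rw [this, hyg]
  simp only [dotProduct, Matrix.mulVec, dotProduct, Finset.mul_sum]
  calc ∑ xb, ∑ x, Real.sqrt (wb xb) * ystar xb *
        (AbarN wb wc xb x * (Real.sqrt (wX wb wc x) * g x))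
      = ∑ xb, ∑ x, wb xb * wc xb x * (1 - 2 * (if g x ≠ ystar xb then (1:ℝ) else 0)) := by
        exact Finset.sum_congr rfl fun xb _ => Finset.sum_congr rfl fun x _ => key xb x
    _ = ∑ xb, (wb xb - 2 * (wb xb * ∑ x, wc xb x * (if g x ≠ ystar xb then (1:ℝ) else 0))) := by
        refine Finset.sum_congr rfl fun xb _ => ?_
        have h : (∑ x, wb xb * wc xb x * (1 - 2 * (if g x ≠ ystar xb then (1:ℝ) else 0)))
            = wb xb * ((∑ x, wc xb x) - 2 * ∑ x, wc xb x * (if g x ≠ ystar xb then (1:ℝ) else 0)) := by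
          rw [mul_sub, Finset.mul_sum, Finset.mul_sum, Finset.mul_sum, ← Finset.sum_sub_distrib]
          exact Finset.sum_congr rfl fun x _ => by ring
        rw [h, hwcsum]; ring
    _ = 1 - 2 * Delta wb wc g ystar := by
        rw [Finset.sum_sub_distrib, hwbsum, Delta, ← Finset.mul_sum]
end

section
/- If there exists a predictor on augmentations that is consistent with the labels and approximately expressible by the features, then the normalized label vector is nearly preserved by P_{Φ_n}Ā_nᵀ: for any feature map φ : X → ℝ^D, any g : X → {±1}, and any y* : X̄ → {±1}, ‖P_{Φ_n} Ā_nᵀ y*_n‖₂ ≥ 1 − 2·Δ(g, y*) − √(L_reg(φ; g)). -/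
open Matrix Finset

variable {Xb X : Type*} [Fintype Xb] [Fintype X] [DecidableEq Xb] [DecidableEq X]

private lemma sym_inner_aux {X : Type*} [Fintype X] (P : Matrix X X ℝ) (hs : P.IsSymm)
    (a b : X → ℝ) : ∑ x, P.mulVec a x * b x = ∑ x, a x * P.mulVec b x := by
  simp only [Matrix.mulVec, dotProduct, Finset.sum_mul, Finset.mul_sum]
  rw [Finset.sum_comm]
  refine Finset.sum_congr rfl fun y _ => Finset.sum_congr rfl fun x _ => ?_
  rw [hs.apply x y]; ring

private lemma proj_contract_aux {X : Type*} [Fintype X] (P : Matrix X X ℝ) (hs : P.IsSymm)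
    (hi : P * P = P) (r : X → ℝ) :
    ∑ x, (r x - P.mulVec r x) ^ 2 ≤ ∑ x, r x ^ 2 := by
  set q : X → ℝ := fun x => r x - P.mulVec r x with hq
  have hPq : P.mulVec q = 0 := by
    have h0 : P.mulVec q = P.mulVec r - (P * P).mulVec r := by
      have : q = r - P.mulVec r := rfl
      rw [this, Matrix.mulVec_sub, Matrix.mulVec_mulVec]
    rw [h0, hi, sub_self]
  have hqq : ∑ x, q x ^ 2 = ∑ x, r x * q x := by
    have h1 : ∑ x, q x ^ 2 = ∑ x, r x * q x - ∑ x, P.mulVec r x * q x := by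
      rw [← Finset.sum_sub_distrib]
      refine Finset.sum_congr rfl fun x _ => by simp [hq]; ring
    have h2 : ∑ x, P.mulVec r x * q x = 0 := by
      rw [sym_inner_aux P hs, hPq]; simp
    rw [h1, h2, sub_zero]
  have hcs := Finset.sum_mul_sq_le_sq_mul_sq Finset.univ r q
  have hqnn : (0:ℝ) ≤ ∑ x, q x ^ 2 := Finset.sum_nonneg fun x _ => sq_nonneg _
  rcases eq_or_lt_of_le hqnn with h0 | h0
  · rw [← h0]; exact Finset.sum_nonneg fun x _ => sq_nonneg _
  · nlinarith [hcs, hqq, h0]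

private lemma AbarN_apply {Xb X : Type*} [Fintype Xb] [Fintype X] [DecidableEq Xb]
    [DecidableEq X] (wb : Xb → ℝ) (wc : Xb → X → ℝ) (xb : Xb) (x : X) :
    AbarN wb wc xb x
      = (Real.sqrt (wb xb))⁻¹ * (wb xb * wc xb x) * (Real.sqrt (wX wb wc x))⁻¹ := by
  unfold AbarN
  rw [Matrix.mul_diagonal, Matrix.diagonal_mul]; rfl

/-- `‖P_{Φ_n} Ā_nᵀ y*_n‖₂ ≥ 1 − 2·Δ(g, y*) − √(L_reg(φ; g))`. -/
theorem label_preserved_by_projected_matrix {D : ℕ} [Nonempty Xb] [Nonempty X]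
    (wb : Xb → ℝ) (wc : Xb → X → ℝ)
    (hwb : ∀ xb, 0 < wb xb) (hwbsum : ∑ xb, wb xb = 1)
    (hwc : ∀ xb x, 0 ≤ wc xb x) (hwcsum : ∀ xb, ∑ x, wc xb x = 1)
    (hwx : ∀ x, 0 < wX wb wc x)
    (φ : X → Fin D → ℝ)
    (P : Matrix X X ℝ) (hP : IsProjOnto P (Nmat (wX wb wc) φ))
    (g : X → ℝ) (ystar : Xb → ℝ)
    (hg : ∀ x, g x = 1 ∨ g x = -1) (hy : ∀ xb, ystar xb = 1 ∨ ystar xb = -1) :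
    1 - 2 * Delta wb wc g ystar - Real.sqrt (LregPhi (wX wb wc) φ g)
      ≤ Real.sqrt (∑ x,
          ((P * (AbarN wb wc)ᵀ).mulVec (fun xb => Real.sqrt (wb xb) * ystar xb)) x ^ 2) := by
  classical
  obtain ⟨hPsym, hPidem, hPrange⟩ := hP
  set w : X → ℝ := wX wb wc with hw_def
  have hw : ∀ x, 0 < w x := hwx
  have hwnn : ∀ x, (0:ℝ) ≤ w x := fun x => (hw x).le
  have hsq : ∀ x, Real.sqrt (w x) ≠ 0 := fun x => ne_of_gt (Real.sqrt_pos.mpr (hw x))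
  have hsqb : ∀ xb, Real.sqrt (wb xb) ≠ 0 := fun xb => ne_of_gt (Real.sqrt_pos.mpr (hwb xb))
  have hwx_eq : ∀ x, w x = ∑ xb, wb xb * wc xb x := fun x => rfl
  set yn : Xb → ℝ := fun xb => Real.sqrt (wb xb) * ystar xb with hyn_def
  set u : X → ℝ := (AbarN wb wc)ᵀ.mulVec yn with hu_def
  set S : X → ℝ := fun x => ∑ xb, wb xb * wc xb x * ystar xb with hS_def
  have hg2 : ∀ x, g x ^ 2 = 1 := fun x => by rcases hg x with h | h <;> rw [h] <;> norm_num
  have hy2 : ∀ xb, ystar xb ^ 2 = 1 := fun xb => by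
    rcases hy xb with h | h <;> rw [h] <;> norm_num
  have hux : ∀ x, u x = (Real.sqrt (w x))⁻¹ * S x := by
    intro x
    have e : ∀ xb, (AbarN wb wc)ᵀ x xb * yn xb
        = (Real.sqrt (w x))⁻¹ * (wb xb * wc xb x * ystar xb) := by
      intro xb
      rw [Matrix.transpose_apply, AbarN_apply, hyn_def]
      rw [show (Real.sqrt (wb xb))⁻¹ * (wb xb * wc xb x) * (Real.sqrt (wX wb wc x))⁻¹ *
            (Real.sqrt (wb xb) * ystar xb)
          = ((Real.sqrt (wb xb))⁻¹ * Real.sqrt (wb xb)) *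
            ((Real.sqrt (wX wb wc x))⁻¹ * (wb xb * wc xb x * ystar xb)) from by ring,
        inv_mul_cancel₀ (hsqb xb), one_mul]
      try rfl
    calc u x = ∑ xb, (AbarN wb wc)ᵀ x xb * yn xb := rfl
    _ = ∑ xb, (Real.sqrt (w x))⁻¹ * (wb xb * wc xb x * ystar xb) :=
        Finset.sum_congr rfl fun xb _ => e xb
    _ = (Real.sqrt (w x))⁻¹ * S x := by rw [← Finset.mul_sum]
  set gn : X → ℝ := fun x => Real.sqrt (w x) * g x with hgn_def
  have hsumw : ∑ x, w x = 1 := by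
    calc ∑ x, w x = ∑ x, ∑ xb, wb xb * wc xb x := Finset.sum_congr rfl fun x _ => hwx_eq x
    _ = ∑ xb, ∑ x, wb xb * wc xb x := Finset.sum_comm
    _ = ∑ xb, wb xb * ∑ x, wc xb x := by simp [Finset.mul_sum]
    _ = 1 := by simp [hwcsum, hwbsum]
  have hgn1 : ∑ x, gn x ^ 2 = 1 := by
    calc ∑ x, gn x ^ 2 = ∑ x, w x := by
          refine Finset.sum_congr rfl fun x _ => ?_
          show (Real.sqrt (w x) * g x) ^ 2 = w x
          rw [mul_pow, Real.sq_sqrt (hwnn x), hg2 x, mul_one]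
    _ = 1 := hsumw
  have hS2 : ∀ x, S x ^ 2 ≤ w x ^ 2 := by
    intro x
    have hnn : ∀ xb, (0:ℝ) ≤ wb xb * wc xb x := fun xb => mul_nonneg (hwb xb).le (hwc xb x)
    have key := Finset.sum_mul_sq_le_sq_mul_sq Finset.univ
      (fun xb => Real.sqrt (wb xb * wc xb x))
      (fun xb => Real.sqrt (wb xb * wc xb x) * ystar xb)
    have e1 : ∀ xb, Real.sqrt (wb xb * wc xb x) * (Real.sqrt (wb xb * wc xb x) * ystar xb)
        = wb xb * wc xb x * ystar xb := fun xb => by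
      rw [← mul_assoc, Real.mul_self_sqrt (hnn xb)]
    have e2 : ∀ xb, Real.sqrt (wb xb * wc xb x) ^ 2 = wb xb * wc xb x :=
      fun xb => Real.sq_sqrt (hnn xb)
    have e3 : ∀ xb, (Real.sqrt (wb xb * wc xb x) * ystar xb) ^ 2 = wb xb * wc xb x :=
      fun xb => by rw [mul_pow, e2, hy2, mul_one]
    simp only [e1, e2, e3] at key
    calc S x ^ 2 = (∑ xb, wb xb * wc xb x * ystar xb) ^ 2 := rfl
    _ ≤ (∑ xb, wb xb * wc xb x) * ∑ xb, wb xb * wc xb x := key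
    _ = w x ^ 2 := by rw [← hwx_eq x, sq]
  have hu2 : ∑ x, u x ^ 2 ≤ 1 := by
    have hb : ∀ x, u x ^ 2 ≤ w x := by
      intro x
      have h1 : u x ^ 2 = (w x)⁻¹ * S x ^ 2 := by
        rw [hux x, mul_pow, inv_pow, Real.sq_sqrt (hwnn x)]
      rw [h1]
      calc (w x)⁻¹ * S x ^ 2 ≤ (w x)⁻¹ * w x ^ 2 :=
            mul_le_mul_of_nonneg_left (hS2 x) (inv_nonneg.mpr (hwnn x))
      _ = w x := by rw [sq, ← mul_assoc, inv_mul_cancel₀ (ne_of_gt (hw x)), one_mul]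
    calc ∑ x, u x ^ 2 ≤ ∑ x, w x := Finset.sum_le_sum fun x _ => hb x
    _ = 1 := hsumw
  have hinner : ∑ x, u x * gn x = 1 - 2 * Delta wb wc g ystar := by
    have e : ∀ x, u x * gn x = S x * g x := by
      intro x
      rw [hux x]
      show (Real.sqrt (w x))⁻¹ * S x * (Real.sqrt (w x) * g x) = S x * g x
      rw [show (Real.sqrt (w x))⁻¹ * S x * (Real.sqrt (w x) * g x)
          = ((Real.sqrt (w x))⁻¹ * Real.sqrt (w x)) * (S x * g x) from by ring,
        inv_mul_cancel₀ (hsq x), one_mul]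
    have key : ∀ x xb, wb xb * wc xb x * ystar xb * g x
        = wb xb * wc xb x
          - 2 * (wb xb * (wc xb x * (if g x ≠ ystar xb then (1:ℝ) else 0))) := by
      intro x xb
      rcases hg x with h | h <;> rcases hy xb with h' | h' <;>
        simp only [h, h', ne_eq] <;> norm_num <;> try ring
    calc ∑ x, u x * gn x = ∑ x, S x * g x := Finset.sum_congr rfl fun x _ => e x
    _ = ∑ x, ∑ xb, wb xb * wc xb x * ystar xb * g x := by
        refine Finset.sum_congr rfl fun x _ => ?_
        show (∑ xb, wb xb * wc xb x * ystar xb) * g x = _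
        rw [Finset.sum_mul]
    _ = ∑ x, ∑ xb, (wb xb * wc xb x
          - 2 * (wb xb * (wc xb x * (if g x ≠ ystar xb then (1:ℝ) else 0)))) :=
        Finset.sum_congr rfl fun x _ => Finset.sum_congr rfl fun xb _ => key x xb
    _ = (∑ x, ∑ xb, wb xb * wc xb x)
          - 2 * ∑ x, ∑ xb, wb xb * (wc xb x * (if g x ≠ ystar xb then (1:ℝ) else 0)) := by
        simp only [Finset.sum_sub_distrib, Finset.mul_sum]
    _ = 1 - 2 * Delta wb wc g ystar := by
        have hA : ∑ x, ∑ xb, wb xb * wc xb x = 1 := by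
          have hh : ∀ x : X, ∑ xb, wb xb * wc xb x = w x := fun x => (hwx_eq x).symm
          simp only [hh]; exact hsumw
        have hB : ∑ x, ∑ xb, wb xb * (wc xb x * (if g x ≠ ystar xb then (1:ℝ) else 0))
            = Delta wb wc g ystar := by
          rw [Delta, Finset.sum_comm]
          exact Finset.sum_congr rfl fun xb _ => (Finset.mul_sum _ _ _).symm
        rw [hA, hB]
  set q : X → ℝ := fun x => gn x - P.mulVec gn x with hq_def
  have hqnn : (0:ℝ) ≤ ∑ x, q x ^ 2 := Finset.sum_nonneg fun x _ => sq_nonneg _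
  have hqL : ∑ x, q x ^ 2 ≤ LregPhi w φ g := by
    rw [LregPhi]
    refine le_ciInf fun v => ?_
    set z : X → ℝ := (Nmat w φ).mulVec v with hz_def
    have hz : P.mulVec z = z := by
      have hzr : z ∈ LinearMap.range (Nmat w φ).mulVecLin := ⟨v, rfl⟩
      rw [← hPrange] at hzr
      obtain ⟨y, hy'⟩ := hzr
      have hy'' : P.mulVec y = z := hy'
      rw [← hy'', Matrix.mulVec_mulVec, hPidem]
    have hzx : ∀ x, z x = Real.sqrt (w x) * (∑ i, v i * φ x i) := by
      intro x
      calc z x = ∑ i, Real.sqrt (w x) * φ x i * v i := rfl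
      _ = Real.sqrt (w x) * ∑ i, v i * φ x i := by
          rw [Finset.mul_sum]; exact Finset.sum_congr rfl fun i _ => by ring
    set r : X → ℝ := fun x => gn x - z x with hr_def
    have hPr : P.mulVec r = P.mulVec gn - z := by
      have : r = gn - z := rfl
      rw [this, Matrix.mulVec_sub, hz]
    have hqr : ∀ x, q x = r x - P.mulVec r x := by
      intro x
      rw [hPr]
      show gn x - P.mulVec gn x = gn x - z x - (P.mulVec gn x - z x)
      ring
    calc ∑ x, q x ^ 2 = ∑ x, (r x - P.mulVec r x) ^ 2 :=
          Finset.sum_congr rfl fun x _ => by rw [hqr x]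
    _ ≤ ∑ x, r x ^ 2 := proj_contract_aux P hPsym hPidem r
    _ = ∑ x, w x * ((∑ i, v i * φ x i) - g x) ^ 2 := by
        refine Finset.sum_congr rfl fun x _ => ?_
        have h1 : r x = Real.sqrt (w x) * (g x - ∑ i, v i * φ x i) := by
          show Real.sqrt (w x) * g x - z x = _
          rw [hzx x]; ring
        rw [h1, mul_pow, Real.sq_sqrt (hwnn x),
          show (g x - ∑ i, v i * φ x i) ^ 2 = ((∑ i, v i * φ x i) - g x) ^ 2 from by ring]
  have hL0 : (0:ℝ) ≤ LregPhi w φ g := le_trans hqnn hqL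
  have h1 : ∑ x, u x * q x ≤ Real.sqrt (LregPhi w φ g) := by
    have hcs := Finset.sum_mul_sq_le_sq_mul_sq Finset.univ u q
    have hle : (∑ x, u x * q x) ^ 2 ≤ LregPhi w φ g := by
      calc (∑ x, u x * q x) ^ 2 ≤ (∑ x, u x ^ 2) * ∑ x, q x ^ 2 := hcs
      _ ≤ 1 * LregPhi w φ g := mul_le_mul hu2 hqL hqnn zero_le_one
      _ = LregPhi w φ g := one_mul _
    calc ∑ x, u x * q x ≤ |∑ x, u x * q x| := le_abs_self _
    _ = Real.sqrt ((∑ x, u x * q x) ^ 2) := (Real.sqrt_sq_eq_abs _).symm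
    _ ≤ Real.sqrt (LregPhi w φ g) := Real.sqrt_le_sqrt hle
  have h2 : ∑ x, u x * P.mulVec gn x = (∑ x, u x * gn x) - ∑ x, u x * q x := by
    rw [← Finset.sum_sub_distrib]
    refine Finset.sum_congr rfl fun x _ => ?_
    show u x * P.mulVec gn x = u x * gn x - u x * (gn x - P.mulVec gn x)
    ring
  have h3 : ∑ x, P.mulVec u x * gn x = ∑ x, u x * P.mulVec gn x :=
    sym_inner_aux P hPsym u gn
  have h4 : ∑ x, P.mulVec u x * gn x ≤ Real.sqrt (∑ x, P.mulVec u x ^ 2) := by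
    have hcs := Finset.sum_mul_sq_le_sq_mul_sq Finset.univ (P.mulVec u) gn
    rw [hgn1, mul_one] at hcs
    calc ∑ x, P.mulVec u x * gn x ≤ |∑ x, P.mulVec u x * gn x| := le_abs_self _
    _ = Real.sqrt ((∑ x, P.mulVec u x * gn x) ^ 2) := (Real.sqrt_sq_eq_abs _).symm
    _ ≤ Real.sqrt (∑ x, P.mulVec u x ^ 2) := Real.sqrt_le_sqrt hcs
  have hPuEq : ∑ x, ((P * (AbarN wb wc)ᵀ).mulVec yn) x ^ 2 = ∑ x, P.mulVec u x ^ 2 := by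
    rw [hu_def, Matrix.mulVec_mulVec]
  calc 1 - 2 * Delta wb wc g ystar - Real.sqrt (LregPhi w φ g)
      ≤ (∑ x, u x * gn x) - ∑ x, u x * q x := by rw [hinner]; linarith [h1]
  _ = ∑ x, u x * P.mulVec gn x := h2.symm
  _ = ∑ x, P.mulVec u x * gn x := h3.symm
  _ ≤ Real.sqrt (∑ x, P.mulVec u x ^ 2) := h4
  _ = Real.sqrt (∑ x, ((P * (AbarN wb wc)ᵀ).mulVec yn) x ^ 2) := by rw [hPuEq]
end

section
/- The tail singular directions carry little of the label if the projected matrix preserves it: for any y* : X̄ → {±1} and any d′ with γ_{d′+1} < 1, Σ_{i > d′} (v_iᵀ y*_n)² ≤ (1 − ‖P_{Φ_n} Ā_nᵀ y*_n‖₂²) / (1 − γ_{d′+1}). -/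
open Matrix Finset

variable {Xb X : Type*} [Fintype Xb] [Fintype X] [DecidableEq Xb] [DecidableEq X]

section AuxTail
variable {Xb X : Type*} [Fintype Xb] [Fintype X] [DecidableEq Xb] [DecidableEq X]

omit [DecidableEq X] in
lemma sum_delta_aux {s : Finset ℕ} {i : ℕ} (hi : i ∈ s) (f : ℕ → ℝ) :
    ∑ j ∈ s, f j * (if i = j then (1:ℝ) else 0) = f i := by
  simp [mul_ite, mul_one, mul_zero, Finset.sum_ite_eq, hi]

omit [DecidableEq X] in
lemma sum_delta_aux' {s : Finset ℕ} {i : ℕ} (hi : i ∈ s) (f : ℕ → ℝ) :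
    ∑ j ∈ s, f j * (if j = i then (1:ℝ) else 0) = f i := by
  simp [mul_ite, mul_one, mul_zero, Finset.sum_ite_eq', hi]

omit [DecidableEq X] in
lemma sq_sum_orthonormal {s : Finset ℕ} (a : ℕ → ℝ) (u : ℕ → X → ℝ)
    (hu : ∀ i ∈ s, ∀ j ∈ s, ∑ x, u i x * u j x = if i = j then (1:ℝ) else 0) :
    ∑ x, (∑ i ∈ s, a i * u i x) ^ 2 = ∑ i ∈ s, a i ^ 2 := by
  have h1 : ∀ x, (∑ i ∈ s, a i * u i x) ^ 2
      = ∑ i ∈ s, ∑ j ∈ s, (a i * a j) * (u i x * u j x) := by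
    intro x
    rw [sq, Finset.sum_mul_sum]
    exact Finset.sum_congr rfl fun i _ => Finset.sum_congr rfl fun j _ => by ring
  calc ∑ x, (∑ i ∈ s, a i * u i x) ^ 2
      = ∑ i ∈ s, ∑ j ∈ s, (a i * a j) * (∑ x, u i x * u j x) := by
        simp_rw [h1, Finset.mul_sum]
        rw [Finset.sum_comm]
        refine Finset.sum_congr rfl fun i _ => ?_
        rw [Finset.sum_comm]
    _ = ∑ i ∈ s, a i ^ 2 := by
        refine Finset.sum_congr rfl fun i hi => ?_
        have : ∀ j ∈ s, (a i * a j) * (∑ x, u i x * u j x)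
            = (a i * a j) * (if i = j then (1:ℝ) else 0) := fun j hj => by
          rw [hu i hi j hj]
        rw [Finset.sum_congr rfl this]
        have := sum_delta_aux hi (fun j => a i * a j)
        rw [this, sq]

omit [DecidableEq Xb] [DecidableEq X] in
lemma bessel_aux {s : Finset ℕ} (v : ℕ → Xb → ℝ) (y : Xb → ℝ)
    (hv : ∀ i ∈ s, ∀ j ∈ s, ∑ xb, v i xb * v j xb = if i = j then (1:ℝ) else 0) :
    ∑ i ∈ s, (∑ xb, v i xb * y xb) ^ 2 ≤ ∑ xb, y xb ^ 2 := by
  set c : ℕ → ℝ := fun i => ∑ xb, v i xb * y xb with hc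
  have key : (0:ℝ) ≤ ∑ xb, (y xb - ∑ i ∈ s, c i * v i xb) ^ 2 :=
    Finset.sum_nonneg fun _ _ => sq_nonneg _
  have expand : ∑ xb, (y xb - ∑ i ∈ s, c i * v i xb) ^ 2
      = ∑ xb, y xb ^ 2 - 2 * (∑ xb, (∑ i ∈ s, c i * v i xb) * y xb)
        + ∑ xb, (∑ i ∈ s, c i * v i xb) ^ 2 := by
    have h : ∀ xb, (y xb - ∑ i ∈ s, c i * v i xb) ^ 2
        = y xb ^ 2 - 2 * ((∑ i ∈ s, c i * v i xb) * y xb)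
          + (∑ i ∈ s, c i * v i xb) ^ 2 := fun xb => by ring
    simp_rw [h]
    rw [Finset.sum_add_distrib, Finset.sum_sub_distrib, ← Finset.mul_sum]
  have cross : ∑ xb, (∑ i ∈ s, c i * v i xb) * y xb = ∑ i ∈ s, c i ^ 2 := by
    simp_rw [Finset.sum_mul, mul_assoc]
    rw [Finset.sum_comm]
    refine Finset.sum_congr rfl fun i _ => ?_
    rw [← Finset.mul_sum, sq]
  have sq2 : ∑ xb, (∑ i ∈ s, c i * v i xb) ^ 2 = ∑ i ∈ s, c i ^ 2 :=
    sq_sum_orthonormal c v hv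
  rw [expand, cross, sq2] at key
  linarith

omit [DecidableEq Xb] [DecidableEq X] in
lemma proj_contract (P : Matrix X X ℝ) (h1 : P.IsSymm) (h2 : P * P = P) (w : X → ℝ) :
    ∑ x, (P.mulVec w x) ^ 2 ≤ ∑ x, w x ^ 2 := by
  set q := P.mulVec w with hq
  have hsymm : P.vecMul q = q := by
    rw [← Matrix.transpose_transpose P, Matrix.vecMul_transpose, h1.eq, hq,
      Matrix.mulVec_mulVec, h2]
  have hqq : q ⬝ᵥ q = w ⬝ᵥ q := by
    calc q ⬝ᵥ q = q ⬝ᵥ P.mulVec w := by rw [hq]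
      _ = P.vecMul q ⬝ᵥ w := by rw [Matrix.dotProduct_mulVec]
      _ = q ⬝ᵥ w := by rw [hsymm]
      _ = w ⬝ᵥ q := dotProduct_comm _ _
  have hqq' : ∑ x, q x ^ 2 = ∑ x, w x * q x := by
    simpa [dotProduct, sq] using hqq
  have key : (0:ℝ) ≤ ∑ x, (w x - q x) ^ 2 := Finset.sum_nonneg fun _ _ => sq_nonneg _
  have expand : ∑ x, (w x - q x) ^ 2
      = ∑ x, w x ^ 2 - 2 * ∑ x, w x * q x + ∑ x, q x ^ 2 := by
    have h : ∀ x, (w x - q x) ^ 2 = w x ^ 2 - 2 * (w x * q x) + q x ^ 2 := fun x => by ring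
    simp_rw [h]
    rw [Finset.sum_add_distrib, Finset.sum_sub_distrib, ← Finset.mul_sum]
  linarith

lemma abarN_contract (wb : Xb → ℝ) (wc : Xb → X → ℝ)
    (hwb : ∀ xb, 0 < wb xb) (hwc : ∀ xb x, 0 ≤ wc xb x) (hwcsum : ∀ xb, ∑ x, wc xb x = 1)
    (hwx : ∀ x, 0 < wX wb wc x) (z : Xb → ℝ) :
    ∑ x, ((AbarN wb wc)ᵀ.mulVec z x) ^ 2 ≤ ∑ xb, z xb ^ 2 := by
  have hent : ∀ xb x, AbarN wb wc xb x
      = Real.sqrt (wb xb) * wc xb x * (Real.sqrt (wX wb wc x))⁻¹ := by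
    intro xb x
    have h1 : Real.sqrt (wb xb) * Real.sqrt (wb xb) = wb xb :=
      Real.mul_self_sqrt (hwb xb).le
    have h0 : Real.sqrt (wb xb) ≠ 0 := ne_of_gt (Real.sqrt_pos.mpr (hwb xb))
    rw [AbarN, Matrix.mul_diagonal, Matrix.diagonal_mul]
    show (Real.sqrt (wb xb))⁻¹ * (wb xb * wc xb x) * (Real.sqrt (wX wb wc x))⁻¹ = _
    set swb := Real.sqrt (wb xb) with hswb
    rw [← h1]
    calc swb⁻¹ * (swb * swb * wc xb x) * (Real.sqrt (wX wb wc x))⁻¹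
        = (swb⁻¹ * swb) * (swb * wc xb x * (Real.sqrt (wX wb wc x))⁻¹) := by ring
      _ = swb * wc xb x * (Real.sqrt (wX wb wc x))⁻¹ := by
          rw [inv_mul_cancel₀ h0, one_mul]
  have hmv : ∀ x, (AbarN wb wc)ᵀ.mulVec z x
      = ∑ xb, (Real.sqrt (wc xb x) * z xb)
          * (Real.sqrt (wb xb) * Real.sqrt (wc xb x) * (Real.sqrt (wX wb wc x))⁻¹) := by
    intro x
    rw [Matrix.mulVec, dotProduct]
    refine Finset.sum_congr rfl fun xb _ => ?_
    rw [Matrix.transpose_apply, hent]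
    have h2 : Real.sqrt (wc xb x) * Real.sqrt (wc xb x) = wc xb x :=
      Real.mul_self_sqrt (hwc xb x)
    set swc := Real.sqrt (wc xb x) with hswc
    rw [← h2]
    ring
  have hstep : ∀ x, ((AbarN wb wc)ᵀ.mulVec z x) ^ 2 ≤ ∑ xb, wc xb x * z xb ^ 2 := by
    intro x
    rw [hmv x]
    calc (∑ xb, (Real.sqrt (wc xb x) * z xb)
          * (Real.sqrt (wb xb) * Real.sqrt (wc xb x) * (Real.sqrt (wX wb wc x))⁻¹)) ^ 2
        ≤ (∑ xb, (Real.sqrt (wc xb x) * z xb) ^ 2)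
            * ∑ xb, (Real.sqrt (wb xb) * Real.sqrt (wc xb x)
                * (Real.sqrt (wX wb wc x))⁻¹) ^ 2 :=
          Finset.sum_mul_sq_le_sq_mul_sq _ _ _
      _ = (∑ xb, wc xb x * z xb ^ 2) * ((∑ xb, wb xb * wc xb x) * (wX wb wc x)⁻¹) := by
          congr 1
          · refine Finset.sum_congr rfl fun xb _ => ?_
            rw [mul_pow, Real.sq_sqrt (hwc xb x)]
          · rw [show (∑ xb, (Real.sqrt (wb xb) * Real.sqrt (wc xb x)
                * (Real.sqrt (wX wb wc x))⁻¹) ^ 2)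
              = ∑ xb, wb xb * wc xb x * (wX wb wc x)⁻¹ from
              Finset.sum_congr rfl fun xb _ => by
                rw [mul_pow, mul_pow, Real.sq_sqrt (hwb xb).le, Real.sq_sqrt (hwc xb x),
                  inv_pow, Real.sq_sqrt (hwx x).le],
              ← Finset.sum_mul]
      _ = ∑ xb, wc xb x * z xb ^ 2 := by
          rw [show (∑ xb, wb xb * wc xb x) = wX wb wc x from rfl,
            mul_inv_cancel₀ (ne_of_gt (hwx x)), mul_one]
  calc ∑ x, ((AbarN wb wc)ᵀ.mulVec z x) ^ 2
      ≤ ∑ x, ∑ xb, wc xb x * z xb ^ 2 :=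
        Finset.sum_le_sum fun x _ => hstep x
    _ = ∑ xb, z xb ^ 2 := by
        rw [Finset.sum_comm]
        refine Finset.sum_congr rfl fun xb _ => ?_
        rw [← Finset.sum_mul, hwcsum xb, one_mul]

end AuxTail

/-- tail singular directions carry little of the label:
`Σ_{i>d′} (v_iᵀ y*_n)² ≤ (1 − ‖P_{Φ_n} Ā_nᵀ y*_n‖₂²) / (1 − γ_{d′+1})`. -/
theorem tail_directions_small {D : ℕ} [Nonempty Xb] [Nonempty X]
    (wb : Xb → ℝ) (wc : Xb → X → ℝ)
    (hwb : ∀ xb, 0 < wb xb) (hwbsum : ∑ xb, wb xb = 1)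
    (hwc : ∀ xb x, 0 ≤ wc xb x) (hwcsum : ∀ xb, ∑ x, wc xb x = 1)
    (hwx : ∀ x, 0 < wX wb wc x)
    (φ : X → Fin D → ℝ)
    (P : Matrix X X ℝ) (hP : IsProjOnto P (Nmat (wX wb wc) φ))
    (γ : ℕ → ℝ) (u : ℕ → X → ℝ) (v : ℕ → Xb → ℝ)
    (hγnonneg : ∀ i, 0 ≤ γ i)
    (hγmono : ∀ i j, 1 ≤ i → i ≤ j → γ j ≤ γ i)
    (hγpad : ∀ i, min (Fintype.card X) (Fintype.card Xb) < i → γ i = 0)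
    (hu : ∀ i ∈ Finset.Icc 1 (min (Fintype.card X) (Fintype.card Xb)),
        ∀ j ∈ Finset.Icc 1 (min (Fintype.card X) (Fintype.card Xb)),
        ∑ x, u i x * u j x = if i = j then (1 : ℝ) else 0)
    (hv : ∀ i ∈ Finset.Icc 1 (Fintype.card Xb), ∀ j ∈ Finset.Icc 1 (Fintype.card Xb),
        ∑ xb, v i xb * v j xb = if i = j then (1 : ℝ) else 0)
    (hsvd : ∀ x xb, (P * (AbarN wb wc)ᵀ) x xb
        = ∑ i ∈ Finset.Icc 1 (min (Fintype.card X) (Fintype.card Xb)),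
            Real.sqrt (γ i) * u i x * v i xb)
    (ystar : Xb → ℝ) (hy : ∀ xb, ystar xb = 1 ∨ ystar xb = -1)
    (d' : ℕ) (hγ : γ (d' + 1) < 1) :
    ∑ i ∈ Finset.Icc (d' + 1) (Fintype.card Xb),
        (∑ xb, v i xb * (Real.sqrt (wb xb) * ystar xb)) ^ 2
      ≤ (1 - ∑ x,
            ((P * (AbarN wb wc)ᵀ).mulVec (fun xb => Real.sqrt (wb xb) * ystar xb)) x ^ 2)
          / (1 - γ (d' + 1)) := by
    classical
  set r := min (Fintype.card X) (Fintype.card Xb) with hr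
  set n := Fintype.card Xb with hn
  set Sr := Finset.Icc 1 r with hSr
  set Sn := Finset.Icc 1 n with hSn
  set T := Finset.Icc (d' + 1) n with hT
  set yv : Xb → ℝ := fun xb => Real.sqrt (wb xb) * ystar xb with hyv
  set M := P * (AbarN wb wc)ᵀ with hM
  set ci : ℕ → ℝ := fun i => ∑ xb, v i xb * yv xb with hci
  have hrn : r ≤ n := min_le_right _ _
  have hSr_sub : Sr ⊆ Sn := Finset.Icc_subset_Icc_right hrn
  have hT_sub : T ⊆ Sn := Finset.Icc_subset_Icc_left (Nat.le_add_left 1 d')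
  -- norm of yv is 1
  have hynorm : ∑ xb, yv xb ^ 2 = 1 := by
    rw [← hwbsum]
    refine Finset.sum_congr rfl fun xb _ => ?_
    have h1 : ystar xb ^ 2 = 1 := by rcases hy xb with h | h <;> rw [h] <;> norm_num
    rw [hyv]
    show (Real.sqrt (wb xb) * ystar xb) ^ 2 = wb xb
    rw [mul_pow, Real.sq_sqrt (hwb xb).le, h1, mul_one]
  have hbessel : ∑ i ∈ Sn, ci i ^ 2 ≤ 1 := (bessel_aux v yv hv).trans_eq hynorm
  -- M.mulVec yv in terms of the SVD
  have hmvform : ∀ x, M.mulVec yv x = ∑ i ∈ Sr, (Real.sqrt (γ i) * ci i) * u i x := by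
    intro x
    rw [Matrix.mulVec, dotProduct]
    simp_rw [hsvd]
    calc ∑ xb, (∑ i ∈ Sr, Real.sqrt (γ i) * u i x * v i xb) * yv xb
        = ∑ i ∈ Sr, ∑ xb, (Real.sqrt (γ i) * u i x) * (v i xb * yv xb) := by
          simp_rw [Finset.sum_mul]
          rw [Finset.sum_comm]
          refine Finset.sum_congr rfl fun i _ => Finset.sum_congr rfl fun xb _ => by ring
      _ = ∑ i ∈ Sr, (Real.sqrt (γ i) * ci i) * u i x := by
          refine Finset.sum_congr rfl fun i _ => ?_
          rw [← Finset.mul_sum]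
          show Real.sqrt (γ i) * u i x * ci i = _
          ring
  have hnormM : ∑ x, (M.mulVec yv x) ^ 2 = ∑ i ∈ Sr, γ i * ci i ^ 2 := by
    simp_rw [hmvform]
    rw [sq_sum_orthonormal _ u hu]
    refine Finset.sum_congr rfl fun i _ => ?_
    rw [mul_pow, Real.sq_sqrt (hγnonneg i)]
  -- γ k ≤ 1 on Sr
  have hγle1 : ∀ k ∈ Sr, γ k ≤ 1 := by
    intro k hk
    have hvform : ∀ x, M.mulVec (v k) x = Real.sqrt (γ k) * u k x := by
      intro x
      rw [Matrix.mulVec, dotProduct]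
      simp_rw [hsvd]
      calc ∑ xb, (∑ i ∈ Sr, Real.sqrt (γ i) * u i x * v i xb) * v k xb
          = ∑ i ∈ Sr, (Real.sqrt (γ i) * u i x) * (∑ xb, v i xb * v k xb) := by
            simp_rw [Finset.sum_mul]
            rw [Finset.sum_comm]
            refine Finset.sum_congr rfl fun i _ => ?_
            rw [Finset.mul_sum]
            exact Finset.sum_congr rfl fun xb _ => by ring
        _ = ∑ i ∈ Sr, (Real.sqrt (γ i) * u i x) * (if i = k then (1:ℝ) else 0) := by
            refine Finset.sum_congr rfl fun i hi => ?_
            rw [hv i (hSr_sub hi) k (hSr_sub hk)]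
        _ = Real.sqrt (γ k) * u k x := sum_delta_aux' hk _
    have h1 : ∑ x, (M.mulVec (v k) x) ^ 2 = γ k := by
      simp_rw [hvform]
      have huk : ∑ x, u k x * u k x = 1 := by
        have := hu k hk k hk
        simpa using this
      calc ∑ x, (Real.sqrt (γ k) * u k x) ^ 2 = ∑ x, γ k * (u k x * u k x) := by
            refine Finset.sum_congr rfl fun x _ => ?_
            rw [mul_pow, Real.sq_sqrt (hγnonneg k), sq]
        _ = γ k := by rw [← Finset.mul_sum, huk, mul_one]
    have h2 : ∑ x, (M.mulVec (v k) x) ^ 2 ≤ ∑ xb, (v k xb) ^ 2 := by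
      have hsplit : M.mulVec (v k) = P.mulVec ((AbarN wb wc)ᵀ.mulVec (v k)) := by
        rw [hM, ← Matrix.mulVec_mulVec]
      rw [hsplit]
      exact (proj_contract P hP.1 hP.2.1 _).trans
        (abarN_contract wb wc hwb hwc hwcsum hwx (v k))
    have h3 : ∑ xb, (v k xb) ^ 2 = 1 := by
      have := hv k (hSr_sub hk) k (hSr_sub hk)
      simpa [sq] using this
    linarith
  have hγle1' : ∀ i ∈ Sn, γ i ≤ 1 := by
    intro i hi
    by_cases h : i ≤ r
    · exact hγle1 i (Finset.mem_Icc.mpr ⟨(Finset.mem_Icc.mp hi).1, h⟩)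
    · rw [hγpad i (lt_of_not_ge h)]; norm_num
  have hγext : ∑ i ∈ Sn, γ i * ci i ^ 2 = ∑ i ∈ Sr, γ i * ci i ^ 2 := by
    refine (Finset.sum_subset hSr_sub fun i hin hnotr => ?_).symm
    have h1 : 1 ≤ i := (Finset.mem_Icc.mp hin).1
    have h2 : ¬ i ≤ r := fun h => hnotr (Finset.mem_Icc.mpr ⟨h1, h⟩)
    rw [hγpad i (lt_of_not_ge h2), zero_mul]
  -- main chain
  have hchain : (1 - γ (d' + 1)) * ∑ i ∈ T, ci i ^ 2
      ≤ 1 - ∑ x, (M.mulVec yv x) ^ 2 := by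
    rw [hnormM, ← hγext]
    have e2 : ∑ i ∈ T, (1 - γ (d' + 1)) * ci i ^ 2
        ≤ ∑ i ∈ T, (1 - γ i) * ci i ^ 2 := by
      refine Finset.sum_le_sum fun i hi => ?_
      have hle : d' + 1 ≤ i := (Finset.mem_Icc.mp hi).1
      have := hγmono (d' + 1) i (Nat.le_add_left 1 d') hle
      exact mul_le_mul_of_nonneg_right (by linarith) (sq_nonneg _)
    have e3 : ∑ i ∈ T, (1 - γ i) * ci i ^ 2 ≤ ∑ i ∈ Sn, (1 - γ i) * ci i ^ 2 := by
      refine Finset.sum_le_sum_of_subset_of_nonneg hT_sub fun i hi _ => ?_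
      exact mul_nonneg (by linarith [hγle1' i hi]) (sq_nonneg _)
    have e4 : ∑ i ∈ Sn, (1 - γ i) * ci i ^ 2
        = ∑ i ∈ Sn, ci i ^ 2 - ∑ i ∈ Sn, γ i * ci i ^ 2 := by
      rw [← Finset.sum_sub_distrib]
      exact Finset.sum_congr rfl fun i _ => by ring
    have e1 : (1 - γ (d' + 1)) * ∑ i ∈ T, ci i ^ 2
        = ∑ i ∈ T, (1 - γ (d' + 1)) * ci i ^ 2 := Finset.mul_sum _ _ _
    linarith
  have hpos : (0:ℝ) < 1 - γ (d' + 1) := by linarith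
  rw [le_div_iff₀ hpos]
  calc (∑ i ∈ T, ci i ^ 2) * (1 - γ (d' + 1))
      = (1 - γ (d' + 1)) * ∑ i ∈ T, ci i ^ 2 := mul_comm _ _
    _ ≤ 1 - ∑ x, (M.mulVec yv x) ^ 2 := hchain
end

section
/- Downstream classification error decomposes along the singular directions of the projected augmentation matrix: let f ∈ F_φ have normalized matrix F_n ∈ ℝ^{X×d} and let y* : X̄ → {±1}. For every d′ ≤ d with γ_{d′} > 0, L_clf(f; y*) ≤ 2·‖P⊥_{F_n} U_{:d′}‖_F² / γ_{d′} + 2·Σ_{i > d′} (v_iᵀ y*_n)². -/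
open Matrix Finset

variable {Xb X : Type*} [Fintype Xb] [Fintype X] [DecidableEq Xb] [DecidableEq X]

/-!
Expand the normalized label vector `y*_n = ∑ᵢ cᵢ vᵢ` in the orthonormal basis `(vᵢ)`. Since
`P_{Φ_n}` is a projection, the left singular vectors satisfy `Ā_n uᵢ = √γᵢ vᵢ`, so
`q = ∑_{i ≤ d′} (cᵢ / √γᵢ) uᵢ` is mapped by `Ā_n` onto the head `∑_{i ≤ d′} cᵢ vᵢ` of `y*_n`.
The linear probe `a` with `F_n a = P_{F_n} q` has 0-1 loss at most its square loss
`‖Ā_n F_n a − y*_n‖²`, and this residual is `−Ā_n P⊥_{F_n} q` minus the tail `∑_{i > d′} cᵢ vᵢ`.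
The Schur test makes `Ā_n` a contraction, and Cauchy–Schwarz together with
`∑ cᵢ² = ‖y*_n‖² = 1` gives `‖P⊥_{F_n} q‖² ≤ ‖P⊥_{F_n} U_{:d′}‖_F² / γ_{d′}`.
-/

def OrthonormalOn {κ ι : Type*} [Fintype ι] [DecidableEq κ] (s : Finset κ) (v : κ → ι → ℝ) :
    Prop :=
  ∀ i ∈ s, ∀ j ∈ s, v i ⬝ᵥ v j = if i = j then 1 else 0

namespace OrthonormalOn

variable {κ ι : Type*} [Fintype ι] [DecidableEq κ] {s t : Finset κ} {v : κ → ι → ℝ}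

theorem mono (hv : OrthonormalOn s v) (hts : t ⊆ s) : OrthonormalOn t v :=
  fun i hi j hj => hv i (hts hi) j (hts hj)

theorem sum_mul_dotProduct (hv : OrthonormalOn s v) (a : κ → ℝ) {i : κ} (hi : i ∈ s) :
    ∑ j ∈ s, a j * (v j ⬝ᵥ v i) = a i := by
  rw [sum_congr rfl fun j hj => by rw [hv j hj i hi]]
  simp [hi]

theorem sum_sq_sum_smul (hv : OrthonormalOn s v) (a : κ → ℝ) :
    ∑ x, (∑ i ∈ s, a i • v i) x ^ 2 = ∑ i ∈ s, a i ^ 2 := by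
  calc ∑ x, (∑ i ∈ s, a i • v i) x ^ 2
      = ∑ i ∈ s, a i * ∑ j ∈ s, a j * (v j ⬝ᵥ v i) := by
        simp only [sq]
        change (∑ i ∈ s, a i • v i) ⬝ᵥ (∑ j ∈ s, a j • v j) = _
        simp only [sum_dotProduct, dotProduct_sum, smul_dotProduct, dotProduct_smul, smul_eq_mul,
          mul_sum]
    _ = ∑ i ∈ s, a i ^ 2 := sum_congr rfl fun i hi => by rw [hv.sum_mul_dotProduct a hi, sq]

theorem sum_dotProduct_smul (hv : OrthonormalOn s v) (hs : s.card = Fintype.card ι)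
    (y : ι → ℝ) : ∑ i ∈ s, (v i ⬝ᵥ y) • v i = y := by
  classical
  let M : Matrix s ι ℝ := Matrix.of fun i => v i
  have hMMt : M * Mᵀ = 1 := by
    ext i j
    rw [mul_apply, one_apply]
    convert hv i i.2 j j.2 using 2
    exacts [rfl, Subtype.ext_iff]
  have hMtM : Mᵀ * M = 1 :=
    (mul_eq_one_comm_of_equiv (Fintype.equivOfCardEq (by simp [hs]))).mp hMMt
  calc ∑ i ∈ s, (v i ⬝ᵥ y) • v i = (Mᵀ * M) *ᵥ y := by
        ext x
        rw [← sum_coe_sort s, Finset.sum_apply]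
        simp only [mul_apply, mulVec, dotProduct, sum_mul, Pi.smul_apply, smul_eq_mul]
        rw [sum_comm]
        exact sum_congr rfl fun i _ => sum_congr rfl fun x' _ => by
          simp only [M, transpose_apply, of_apply]; ring
    _ = y := by rw [hMtM, one_mulVec]

theorem sum_sq_eq_sum_sq_dotProduct (hv : OrthonormalOn s v) (hs : s.card = Fintype.card ι)
    (y : ι → ℝ) : ∑ x, y x ^ 2 = ∑ i ∈ s, (v i ⬝ᵥ y) ^ 2 := by
  conv_lhs => rw [← hv.sum_dotProduct_smul hs y]
  exact hv.sum_sq_sum_smul _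

theorem sum_sq_dotProduct_le (hv : OrthonormalOn s v) (hs : s.card = Fintype.card ι)
    (hts : t ⊆ s) (y : ι → ℝ) : ∑ i ∈ t, (v i ⬝ᵥ y) ^ 2 ≤ ∑ x, y x ^ 2 :=
  (hv.sum_sq_eq_sum_sq_dotProduct hs y).symm ▸
    sum_le_sum_of_subset_of_nonneg hts fun _ _ _ => sq_nonneg _

theorem sum_sq_dotProduct_div_sqrt_le (hv : OrthonormalOn s v) (hs : s.card = Fintype.card ι)
    (hts : t ⊆ s) {γ : κ → ℝ} {l : ℝ} (hl : 0 < l) (hγ : ∀ i ∈ t, l ≤ γ i) (y : ι → ℝ) :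
    ∑ i ∈ t, (v i ⬝ᵥ y / √(γ i)) ^ 2 ≤ (∑ x, y x ^ 2) / l :=
  calc ∑ i ∈ t, (v i ⬝ᵥ y / √(γ i)) ^ 2 ≤ ∑ i ∈ t, (v i ⬝ᵥ y) ^ 2 / l :=
        sum_le_sum fun i hi => by
          rw [div_pow, Real.sq_sqrt (hl.trans_le (hγ i hi)).le]
          gcongr
          exact hγ i hi
    _ ≤ (∑ x, y x ^ 2) / l := by
        rw [← sum_div]
        gcongr
        exact hv.sum_sq_dotProduct_le hs hts y

end OrthonormalOn

section SingularVectors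

variable {m n κ : Type*} [Fintype m] [DecidableEq κ] {s : Finset κ} {σ : κ → ℝ}
  {u : κ → n → ℝ} {v : κ → m → ℝ}

theorem mulVec_eq_smul_of_eq_sum {M : Matrix n m ℝ}
    (hM : ∀ x y, M x y = ∑ i ∈ s, σ i * u i x * v i y) (hv : OrthonormalOn s v) {i : κ}
    (hi : i ∈ s) : M *ᵥ v i = σ i • u i := by
  ext x
  calc (M *ᵥ v i) x = ∑ j ∈ s, σ j * u j x * (v j ⬝ᵥ v i) := by
        simp only [mulVec, dotProduct, hM, sum_mul, mul_sum]
        rw [sum_comm]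
        exact sum_congr rfl fun j _ => sum_congr rfl fun y _ => by ring
    _ = (σ i • u i) x := hv.sum_mul_dotProduct _ hi

theorem mulVec_eq_smul_of_proj_mul_transpose_eq_sum [Fintype n] {P : Matrix n n ℝ}
    (hPsymm : P.IsSymm) (hPidem : P * P = P) {A : Matrix m n ℝ}
    (hsvd : ∀ x y, (P * Aᵀ) x y = ∑ i ∈ s, σ i * u i x * v i y) (hu : OrthonormalOn s u)
    (hv : OrthonormalOn s v) {i : κ} (hi : i ∈ s) (hσ : σ i ≠ 0) : A *ᵥ u i = σ i • v i := by
  have hMv : (P * Aᵀ) *ᵥ v i = σ i • u i := mulVec_eq_smul_of_eq_sum hsvd hv hi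
  have hMtu : (P * Aᵀ)ᵀ *ᵥ u i = σ i • v i :=
    mulVec_eq_smul_of_eq_sum (fun y x => by rw [transpose_apply, hsvd]; simp only [mul_right_comm])
      hu hi
  have hPu : P *ᵥ u i = u i := by
    refine smul_right_injective _ hσ ?_
    simp only [← mulVec_smul, ← hMv, mulVec_mulVec, ← Matrix.mul_assoc, hPidem]
  calc A *ᵥ u i = (A * P) *ᵥ u i := by rw [← mulVec_mulVec, hPu]
    _ = σ i • v i := by rw [← hMtu, transpose_mul, transpose_transpose, hPsymm.eq]

end SingularVectors

theorem sum_sq_mulVec_sum_smul_le {m n κ : Type*} [Fintype m] [Fintype n] (Q : Matrix m n ℝ)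
    (t : Finset κ) (a : κ → ℝ) (u : κ → n → ℝ) :
    ∑ x, (Q *ᵥ ∑ i ∈ t, a i • u i) x ^ 2 ≤ (∑ i ∈ t, a i ^ 2) * ∑ i ∈ t, ∑ x, (Q *ᵥ u i) x ^ 2 := by
  simp only [mulVec_sum, mulVec_smul, Finset.sum_apply, Pi.smul_apply, smul_eq_mul]
  calc ∑ x, (∑ i ∈ t, a i * (Q *ᵥ u i) x) ^ 2
      ≤ ∑ x, (∑ i ∈ t, a i ^ 2) * ∑ i ∈ t, (Q *ᵥ u i) x ^ 2 :=
        sum_le_sum fun x _ => sum_mul_sq_le_sq_mul_sq _ _ _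
    _ = (∑ i ∈ t, a i ^ 2) * ∑ i ∈ t, ∑ x, (Q *ᵥ u i) x ^ 2 := by rw [← mul_sum, sum_comm]

/-- Schur test for the degree normalization `D_r^{-1/2} B D_c^{-1/2}` of a nonnegative matrix. -/
theorem sum_sq_normalized_mulVec_le {m n : Type*} [Fintype m] [Fintype n] [DecidableEq m]
    [DecidableEq n] {B : Matrix m n ℝ} (hB : ∀ i j, 0 ≤ B i j) {r : m → ℝ} {c : n → ℝ}
    (hr : ∀ i, ∑ j, B i j = r i) (hc : ∀ j, ∑ i, B i j = c j) (z : n → ℝ) :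
    ∑ i, (((diagonal fun i => (√(r i))⁻¹) * B * (diagonal fun j => (√(c j))⁻¹)) *ᵥ z) i ^ 2
      ≤ ∑ j, z j ^ 2 := by
  set a : n → ℝ := fun j => (√(c j))⁻¹ * z j
  have hr0 : ∀ i, 0 ≤ r i := fun i => hr i ▸ sum_nonneg fun j _ => hB i j
  have hc0 : ∀ j, 0 ≤ c j := fun j => hc j ▸ sum_nonneg fun i _ => hB i j
  have hrow : ∀ i, (((diagonal fun i => (√(r i))⁻¹) * B * (diagonal fun j => (√(c j))⁻¹)) *ᵥ z) i
      = (√(r i))⁻¹ * ∑ j, B i j * a j := by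
    intro i
    simp only [mulVec, dotProduct, mul_diagonal, diagonal_mul, mul_sum, a]
    exact sum_congr rfl fun j _ => by ring
  have hrow_le : ∀ i, (∑ j, B i j * a j) ^ 2 ≤ r i * ∑ j, B i j * a j ^ 2 := fun i =>
    hr i ▸ sum_sq_le_sum_mul_sum_of_sq_le_mul _ (fun j _ => hB i j)
      (fun j _ => mul_nonneg (hB i j) (sq_nonneg _)) fun j _ => le_of_eq (by ring)
  calc ∑ i, _ ≤ ∑ i, ∑ j, B i j * a j ^ 2 := sum_le_sum fun i _ => by
        rw [hrow, mul_pow, inv_pow, Real.sq_sqrt (hr0 i)]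
        calc (r i)⁻¹ * (∑ j, B i j * a j) ^ 2 ≤ (r i)⁻¹ * r i * ∑ j, B i j * a j ^ 2 := by
              rw [mul_assoc]; exact mul_le_mul_of_nonneg_left (hrow_le i) (inv_nonneg.2 (hr0 i))
          _ ≤ ∑ j, B i j * a j ^ 2 := mul_le_of_le_one_left
              (sum_nonneg fun j _ => mul_nonneg (hB i j) (sq_nonneg _)) inv_mul_le_one
    _ = ∑ j, c j * (c j)⁻¹ * z j ^ 2 := by
        rw [sum_comm]
        refine sum_congr rfl fun j _ => ?_
        rw [← sum_mul, hc, mul_pow, inv_pow, Real.sq_sqrt (hc0 j), mul_assoc]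
    _ ≤ ∑ j, z j ^ 2 := sum_le_sum fun j _ => mul_le_of_le_one_left (sq_nonneg _) mul_inv_le_one

theorem sum_sq_mulVec_mulVec_sub_le {m n κ : Type*} [Fintype m] [Fintype n] [DecidableEq n]
    [DecidableEq κ] {K : Matrix m n ℝ} (hK : ∀ z, ∑ j, (K *ᵥ z) j ^ 2 ≤ ∑ x, z x ^ 2)
    (R : Matrix n n ℝ)
    {s t : Finset κ} {v : κ → m → ℝ} (hv : OrthonormalOn s v) (hs : s.card = Fintype.card m)
    (hts : t ⊆ s) {σ : κ → ℝ} {u : κ → n → ℝ} (hKu : ∀ i ∈ t, K *ᵥ u i = σ i • v i)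
    (hσ : ∀ i ∈ t, σ i ≠ 0) (y : m → ℝ) :
    ∑ j, (K *ᵥ (R *ᵥ ∑ i ∈ t, (v i ⬝ᵥ y / σ i) • u i) - y) j ^ 2
      ≤ 2 * ∑ x, ((1 - R) *ᵥ ∑ i ∈ t, (v i ⬝ᵥ y / σ i) • u i) x ^ 2
        + 2 * ∑ i ∈ s \ t, (v i ⬝ᵥ y) ^ 2 := by
  set q := ∑ i ∈ t, (v i ⬝ᵥ y / σ i) • u i
  have hKq : K *ᵥ q = ∑ i ∈ t, (v i ⬝ᵥ y) • v i := by
    rw [mulVec_sum]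
    refine sum_congr rfl fun i hi => ?_
    rw [mulVec_smul, hKu i hi, smul_smul, div_mul_cancel₀ _ (hσ i hi)]
  have hdecomp : K *ᵥ (R *ᵥ q) - y
      = -(K *ᵥ ((1 - R) *ᵥ q)) + -∑ i ∈ s \ t, (v i ⬝ᵥ y) • v i := by
    conv_lhs => rw [← hv.sum_dotProduct_smul hs y, ← sum_sdiff hts]
    rw [sub_mulVec, one_mulVec, mulVec_sub, hKq]
    abel
  rw [hdecomp]
  calc ∑ j, (-(K *ᵥ ((1 - R) *ᵥ q)) + -∑ i ∈ s \ t, (v i ⬝ᵥ y) • v i) j ^ 2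
      ≤ ∑ j, 2 * ((K *ᵥ ((1 - R) *ᵥ q)) j ^ 2 + (∑ i ∈ s \ t, (v i ⬝ᵥ y) • v i) j ^ 2) :=
        sum_le_sum fun j _ => by
          simp only [Pi.add_apply, Pi.neg_apply]
          exact add_sq_le.trans_eq (by rw [neg_sq, neg_sq])
    _ = 2 * ∑ j, (K *ᵥ ((1 - R) *ᵥ q)) j ^ 2
          + 2 * ∑ j, (∑ i ∈ s \ t, (v i ⬝ᵥ y) • v i) j ^ 2 := by
        rw [← mul_add, ← sum_add_distrib, mul_sum]
    _ ≤ _ := by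
        rw [(hv.mono sdiff_subset).sum_sq_sum_smul]
        gcongr
        exact hK _

theorem sum_sq_sqrt_mul_eq_one {ι : Type*} [Fintype ι] {w y : ι → ℝ} (hw : ∀ i, 0 ≤ w i)
    (hwsum : ∑ i, w i = 1) (hy : ∀ i, y i = 1 ∨ y i = -1) : ∑ i, (√(w i) * y i) ^ 2 = 1 :=
  hwsum ▸ sum_congr rfl fun i _ => by
    rcases hy i with h | h <;> simp [h, Real.sq_sqrt (hw i)]

section Weights

variable {wb : Xb → ℝ} {wc : Xb → X → ℝ}

theorem sum_sq_AbarN_mulVec_le (hwb : ∀ xb, 0 ≤ wb xb) (hwc : ∀ xb x, 0 ≤ wc xb x)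
    (hwcsum : ∀ xb, ∑ x, wc xb x = 1) (z : X → ℝ) :
    ∑ xb, (AbarN wb wc *ᵥ z) xb ^ 2 ≤ ∑ x, z x ^ 2 :=
  sum_sq_normalized_mulVec_le (fun xb x => mul_nonneg (hwb xb) (hwc xb x))
    (fun xb => show ∑ x, wb xb * wc xb x = wb xb by rw [← mul_sum, hwcsum, mul_one])
    (fun _ => rfl) z

theorem AbarN_mulVec_Nmat_mulVec (hwx : ∀ x, 0 < wX wb wc x) {ι : Type*} [Fintype ι]
    (f : X → ι → ℝ) (a : ι → ℝ) (xb : Xb) :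
    (AbarN wb wc *ᵥ (Nmat (wX wb wc) f *ᵥ a)) xb = √(wb xb) * ∑ i, a i * fbar wc f xb i := by
  have hx : ∀ x, (√(wX wb wc x))⁻¹ * √(wX wb wc x) = 1 :=
    fun x => inv_mul_cancel₀ (Real.sqrt_pos.2 (hwx x)).ne'
  simp only [AbarN, Abar, Nmat, fbar, mulVec, dotProduct, mul_diagonal, diagonal_mul, of_apply,
    mul_sum]
  rw [sum_comm]
  refine sum_congr rfl fun i _ => sum_congr rfl fun x _ => ?_
  linear_combination (wb xb * (√(wb xb))⁻¹ * wc xb x * f x i * a i) * hx x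
    + (a i * wc xb x * f x i) * Real.div_sqrt (x := wb xb)

theorem ite_mul_neg_le_sq_sub {y t : ℝ} (hy : y = 1 ∨ y = -1) :
    (if y * t < 0 then (1 : ℝ) else 0) ≤ (t - y) ^ 2 := by
  rcases hy with rfl | rfl <;> split_ifs <;> nlinarith

theorem Lclf_le_sum_sq_AbarN_mulVec_sub {d : ℕ} (hwb : ∀ xb, 0 ≤ wb xb)
    (hwx : ∀ x, 0 < wX wb wc x) (f : X → Fin d → ℝ) {ystar : Xb → ℝ}
    (hy : ∀ xb, ystar xb = 1 ∨ ystar xb = -1) (a : Fin d → ℝ) :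
    Lclf wb wc f ystar
      ≤ ∑ xb, ((AbarN wb wc *ᵥ (Nmat (wX wb wc) f *ᵥ a)) xb - √(wb xb) * ystar xb) ^ 2 := by
  have hbdd : BddBelow (Set.range fun a : Fin d → ℝ =>
      ∑ xb, wb xb * if ystar xb * ∑ i, a i * fbar wc f xb i < 0 then (1 : ℝ) else 0) :=
    ⟨0, Set.forall_mem_range.2 fun a =>
      sum_nonneg fun xb _ => mul_nonneg (hwb xb) (by split_ifs <;> norm_num)⟩
  refine (ciInf_le hbdd a).trans (sum_le_sum fun xb _ => ?_)
  rw [AbarN_mulVec_Nmat_mulVec hwx, ← mul_sub, mul_pow, Real.sq_sqrt (hwb xb)]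
  exact mul_le_mul_of_nonneg_left (ite_mul_neg_le_sq_sub (hy xb)) (hwb xb)

end Weights

theorem Lclf_decomposition_general {D d : ℕ}
    (wb : Xb → ℝ) (wc : Xb → X → ℝ)
    (hwb : ∀ xb, 0 < wb xb) (hwbsum : ∑ xb, wb xb = 1)
    (hwc : ∀ xb x, 0 ≤ wc xb x) (hwcsum : ∀ xb, ∑ x, wc xb x = 1)
    (hwx : ∀ x, 0 < wX wb wc x)
    (φ : X → Fin D → ℝ)
    (P : Matrix X X ℝ) (hP : IsProjOnto P (Nmat (wX wb wc) φ))
    (f : X → Fin d → ℝ)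
    (PF : Matrix X X ℝ) (hPF : IsProjOnto PF (Nmat (wX wb wc) f))
    (γ : ℕ → ℝ) (u : ℕ → X → ℝ) (v : ℕ → Xb → ℝ)
    (hγmono : ∀ i j, 1 ≤ i → i ≤ j → γ j ≤ γ i)
    (hγpad : ∀ i, min (Fintype.card X) (Fintype.card Xb) < i → γ i = 0)
    (hu : ∀ i ∈ Finset.Icc 1 (min (Fintype.card X) (Fintype.card Xb)),
        ∀ j ∈ Finset.Icc 1 (min (Fintype.card X) (Fintype.card Xb)),
        ∑ x, u i x * u j x = if i = j then (1 : ℝ) else 0)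
    (hv : ∀ i ∈ Finset.Icc 1 (Fintype.card Xb), ∀ j ∈ Finset.Icc 1 (Fintype.card Xb),
        ∑ xb, v i xb * v j xb = if i = j then (1 : ℝ) else 0)
    (hsvd : ∀ x xb, (P * (AbarN wb wc)ᵀ) x xb
        = ∑ i ∈ Finset.Icc 1 (min (Fintype.card X) (Fintype.card Xb)),
            Real.sqrt (γ i) * u i x * v i xb)
    (ystar : Xb → ℝ) (hy : ∀ xb, ystar xb = 1 ∨ ystar xb = -1)
    (d' : ℕ) (hγpos : 0 < γ d') :
    Lclf wb wc f ystar
      ≤ 2 * (∑ i ∈ Finset.Icc 1 d', ∑ x, ((1 - PF).mulVec (u i)) x ^ 2) / γ d'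
        + 2 * ∑ i ∈ Finset.Icc (d' + 1) (Fintype.card Xb),
            (∑ xb, v i xb * (Real.sqrt (wb xb) * ystar xb)) ^ 2 := by
  have hwb0 : ∀ xb, 0 ≤ wb xb := fun xb => (hwb xb).le
  have hd'm : d' ≤ min (Fintype.card X) (Fintype.card Xb) :=
    not_lt.1 fun h => hγpos.ne' (hγpad d' h)
  have hγ : ∀ i ∈ Icc 1 d', γ d' ≤ γ i := fun i hi => hγmono i d' (mem_Icc.1 hi).1 (mem_Icc.1 hi).2
  have hσ : ∀ i ∈ Icc 1 d', √(γ i) ≠ 0 := fun i hi =>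
    Real.sqrt_ne_zero'.2 (hγpos.trans_le (hγ i hi))
  have hvb : OrthonormalOn (Icc 1 (Fintype.card Xb)) v := hv
  have hcard : #(Icc 1 (Fintype.card Xb)) = Fintype.card Xb := by simp
  have hsub : Icc 1 d' ⊆ Icc 1 (Fintype.card Xb) :=
    Icc_subset_Icc le_rfl (hd'm.trans (min_le_right _ _))
  have htail : Icc 1 (Fintype.card Xb) \ Icc 1 d' = Icc (d' + 1) (Fintype.card Xb) := by
    ext i; simp only [mem_sdiff, mem_Icc]; omega
  have hAu : ∀ i ∈ Icc 1 d', AbarN wb wc *ᵥ u i = √(γ i) • v i := fun i hi =>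
    mulVec_eq_smul_of_proj_mul_transpose_eq_sum hP.1 hP.2.1 hsvd hu
      (hvb.mono (Icc_subset_Icc le_rfl (min_le_right _ _))) (Icc_subset_Icc le_rfl hd'm hi)
      (hσ i hi)
  set yn : Xb → ℝ := fun xb => √(wb xb) * ystar xb
  set q := ∑ i ∈ Icc 1 d', (v i ⬝ᵥ yn / √(γ i)) • u i
  obtain ⟨a, ha⟩ : PF *ᵥ q ∈ LinearMap.range (Nmat (wX wb wc) f).mulVecLin := hPF.2.2 ▸ ⟨q, rfl⟩
  calc Lclf wb wc f ystar ≤ ∑ xb, ((AbarN wb wc *ᵥ (PF *ᵥ q)) xb - yn xb) ^ 2 :=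
        ha ▸ Lclf_le_sum_sq_AbarN_mulVec_sub hwb0 hwx f hy a
    _ ≤ 2 * ∑ x, ((1 - PF) *ᵥ q) x ^ 2
          + 2 * ∑ i ∈ Icc (d' + 1) (Fintype.card Xb), (v i ⬝ᵥ yn) ^ 2 :=
        htail ▸ sum_sq_mulVec_mulVec_sub_le (sum_sq_AbarN_mulVec_le hwb0 hwc hwcsum) PF hvb hcard
          hsub hAu hσ yn
    _ ≤ 2 * (∑ i ∈ Icc 1 d', ∑ x, ((1 - PF) *ᵥ u i) x ^ 2) / γ d'
          + 2 * ∑ i ∈ Icc (d' + 1) (Fintype.card Xb), (v i ⬝ᵥ yn) ^ 2 := by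
        have hcoef := hvb.sum_sq_dotProduct_div_sqrt_le hcard hsub hγpos hγ yn
        rw [sum_sq_sqrt_mul_eq_one hwb0 hwbsum hy, one_div] at hcoef
        rw [mul_div_assoc, div_eq_inv_mul]
        gcongr
        exact (sum_sq_mulVec_sum_smul_le _ _ _ _).trans
          (mul_le_mul_of_nonneg_right hcoef (by positivity))

/-- downstream classification error decomposes along the singular
directions of `P_{Φ_n} Ā_nᵀ`:
`L_clf(f; y*) ≤ 2·‖P⊥_{F_n} U_{:d′}‖_F² / γ_{d′} + 2·Σ_{i>d′} (v_iᵀ y*_n)²`. -/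
theorem Lclf_decomposition {D d : ℕ} [Nonempty Xb] [Nonempty X]
    (wb : Xb → ℝ) (wc : Xb → X → ℝ)
    (hwb : ∀ xb, 0 < wb xb) (hwbsum : ∑ xb, wb xb = 1)
    (hwc : ∀ xb x, 0 ≤ wc xb x) (hwcsum : ∀ xb, ∑ x, wc xb x = 1)
    (hwx : ∀ x, 0 < wX wb wc x)
    (φ : X → Fin D → ℝ)
    (P : Matrix X X ℝ) (hP : IsProjOnto P (Nmat (wX wb wc) φ))
    (W : Matrix (Fin D) (Fin d) ℝ) (f : X → Fin d → ℝ)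
    (hf : ∀ x i, f x i = ∑ j, W j i * φ x j)
    (PF : Matrix X X ℝ) (hPF : IsProjOnto PF (Nmat (wX wb wc) f))
    (γ : ℕ → ℝ) (u : ℕ → X → ℝ) (v : ℕ → Xb → ℝ)
    (hγnonneg : ∀ i, 0 ≤ γ i)
    (hγmono : ∀ i j, 1 ≤ i → i ≤ j → γ j ≤ γ i)
    (hγpad : ∀ i, min (Fintype.card X) (Fintype.card Xb) < i → γ i = 0)
    (hu : ∀ i ∈ Finset.Icc 1 (min (Fintype.card X) (Fintype.card Xb)),
        ∀ j ∈ Finset.Icc 1 (min (Fintype.card X) (Fintype.card Xb)),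
        ∑ x, u i x * u j x = if i = j then (1 : ℝ) else 0)
    (hv : ∀ i ∈ Finset.Icc 1 (Fintype.card Xb), ∀ j ∈ Finset.Icc 1 (Fintype.card Xb),
        ∑ xb, v i xb * v j xb = if i = j then (1 : ℝ) else 0)
    (hsvd : ∀ x xb, (P * (AbarN wb wc)ᵀ) x xb
        = ∑ i ∈ Finset.Icc 1 (min (Fintype.card X) (Fintype.card Xb)),
            Real.sqrt (γ i) * u i x * v i xb)
    (ystar : Xb → ℝ) (hy : ∀ xb, ystar xb = 1 ∨ ystar xb = -1)
    (d' : ℕ) (hd'1 : 1 ≤ d') (hd'd : d' ≤ d) (hγpos : 0 < γ d') :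
    Lclf wb wc f ystar
      ≤ 2 * (∑ i ∈ Finset.Icc 1 d', ∑ x, ((1 - PF).mulVec (u i)) x ^ 2) / γ d'
        + 2 * ∑ i ∈ Finset.Icc (d' + 1) (Fintype.card Xb),
            (∑ xb, v i xb * (Real.sqrt (wb xb) * ystar xb)) ^ 2 :=
  Lclf_decomposition_general wb wc hwb hwbsum hwc hwcsum hwx φ P hP f PF hPF γ u v hγmono hγpad hu
    hv hsvd ystar hy d' hγpos
end

section
/- Suppose the feature covariance Σ(φ) is invertible. Let λ_1 ≤ λ_2 ≤ … ≤ λ_D be the eigenvalues of I_D − Σ(φ)^{−1/2} Σ(φ̄) Σ(φ)^{−1/2} in increasing order, and let γ_1 ≥ γ_2 ≥ … ≥ γ_D be the D largest squared singular values of P_{Φ_n} Ā_nᵀ in decreasing order (this matrix has rank at most D). Then λ_i = 1 − γ_i for every i ∈ {1,…,D}. -/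
open Matrix Finset

variable {Xb X : Type*} [Fintype Xb] [Fintype X] [DecidableEq Xb] [DecidableEq X]

/-!
Write `Φ_n = Nmat w φ` and `Φ̄_n = Nmat w̄ φ̄`. Then `Σ(φ) = Φ_nᵀΦ_n`, `Σ(φ̄) = Φ̄_nᵀΦ̄_n` and
`Ā_n Φ_n = Φ̄_n`, so `P = Φ_n Σ(φ)⁻¹ Φ_nᵀ` and `P Ā_nᵀ = Φ_n R² Φ̄_nᵀ`. Hence the Gram matrix
`(P Ā_nᵀ)(P Ā_nᵀ)ᵀ` is `Q diag(1 − λ) Qᵀ` with `Q = Φ_n R E` (`E` the eigenbasis), which has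
orthonormal columns, while the singular value decomposition writes it as `U diag(γ) Uᵀ`. Such a
decomposition determines the characteristic polynomial up to a power of `X`, so the `1 − λ_i` and
the `γ_i` agree as multisets once padded by zeros. Both sequences are decreasing (`1 − λ_i ≥ 0`
because it occurs among the `γ`'s), hence they agree termwise.
-/

open Polynomial in
theorem Polynomial.roots_prod_X_sub_C_comp {R ι : Type*} [CommRing R] [IsDomain R]
    (s : Finset ι) (f : ι → R) : (∏ j ∈ s, (Polynomial.X - C (f j))).roots = s.val.map f := by
  rw [prod_eq_multiset_prod, ← roots_multiset_prod_X_sub_C (s.val.map f), Multiset.map_map]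
  rfl

open Polynomial in
theorem Polynomial.prod_range_add_X_sub_C_of_eq_zero {R : Type*} [CommRing R] {f : ℕ → R}
    {p : ℕ} (hf : ∀ j, p ≤ j → f j = 0) (q : ℕ) :
    ∏ j ∈ range (p + q), (Polynomial.X - C (f j)) =
      (∏ j : Fin p, (Polynomial.X - C (f j))) * Polynomial.X ^ q := by
  have hzero : ∏ j ∈ range q, (Polynomial.X - C (f (p + j))) = Polynomial.X ^ q := by
    simp [hf _ (Nat.le_add_right p _)]
  rw [prod_range_add, hzero, Fin.prod_univ_eq_prod_range (fun j => Polynomial.X - C (f j))]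

theorem Antitone.eq_of_map_range_eq {α : Type*} [LinearOrder α] {f g : ℕ → α}
    (hf : Antitone f) (hg : Antitone g) {N : ℕ} (h : (range N).val.map f = (range N).val.map g)
    {j : ℕ} (hj : j < N) : f j = g j := by
  have hsorted : ∀ {F : ℕ → α}, Antitone F → ((List.range N).map F).Pairwise (· ≥ ·) :=
    fun hF => List.pairwise_map.2 (List.pairwise_lt_range.imp fun hij => hF hij.le)
  have hl : (List.range N).map f = (List.range N).map g :=
    (Multiset.coe_eq_coe.1 (by simpa [Multiset.range] using h)).eq_of_pairwise'
      (hsorted hf) (hsorted hg)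
  simpa [List.getElem?_range hj] using congrArg (·[j]?) hl

namespace Matrix

variable {R : Type*} [CommRing R] {n m l : Type*} [Fintype m]

theorem mul_eq_of_range_le [Fintype n] [Fintype l] {E : Matrix n n R} {A : Matrix n m R}
    {B : Matrix n l R} (hE : E * B = B)
    (h : LinearMap.range A.mulVecLin ≤ LinearMap.range B.mulVecLin) :
    E * A = A := by
  refine ext_iff_mulVec.2 fun v => ?_
  obtain ⟨w, hw⟩ := h ⟨v, rfl⟩
  rw [mulVecLin_apply, mulVecLin_apply] at hw
  rw [← mulVec_mulVec, ← hw, mulVec_mulVec, hE]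

theorem mul_diagonal_mul_transpose_mul_transpose [Fintype l] [DecidableEq m] {U : Matrix n m R}
    {V : Matrix l m R} (hV : Vᵀ * V = 1) (s : m → R) :
    U * diagonal s * Vᵀ * (U * diagonal s * Vᵀ)ᵀ = U * diagonal (fun i => s i * s i) * Uᵀ := by
  simp only [transpose_mul, diagonal_transpose, transpose_transpose, Matrix.mul_assoc]
  rw [← Matrix.mul_assoc Vᵀ V, hV, Matrix.one_mul, ← Matrix.mul_assoc (diagonal s),
    diagonal_mul_diagonal]

theorem mul_mul_self_mul_transpose_mul_transpose [Fintype l] [DecidableEq m] {Φ : Matrix n m R}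
    {Ψ : Matrix l m R} {W : Matrix m m R} (hW : W.IsSymm) {E : Matrix m m R} {d : m → R}
    (hE : W * (Ψᵀ * Ψ) * W = E * diagonal d * Eᵀ) :
    Φ * (W * W) * Ψᵀ * (Φ * (W * W) * Ψᵀ)ᵀ = Φ * W * E * diagonal d * (Φ * W * E)ᵀ := by
  have hE' := congrArg (fun M => Φ * W * M * (Φ * W)ᵀ) hE
  simp only [transpose_mul, transpose_transpose, hW.eq, Matrix.mul_assoc] at hE' ⊢
  exact hE'

theorem transpose_mul_self_eq_one_of_mul_self_eq_inv [Fintype n] [DecidableEq m]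
    {Φ : Matrix n m R} {W : Matrix m m R} (hW : W.IsSymm) (hΦ : IsUnit (Φᵀ * Φ))
    (hWW : W * W = (Φᵀ * Φ)⁻¹) :
    (Φ * W)ᵀ * (Φ * W) = 1 := by
  have h : W * (W * (Φᵀ * Φ)) = 1 := by
    rw [← Matrix.mul_assoc, hWW, nonsing_inv_mul _ ((isUnit_iff_isUnit_det _).1 hΦ)]
  rw [transpose_mul, hW.eq, Matrix.mul_assoc, ← Matrix.mul_assoc Φᵀ, ← Matrix.mul_assoc]
  exact mul_eq_one_comm.1 h

theorem transpose_mul_self_mul_eq_one [Fintype n] [DecidableEq m] [DecidableEq l]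
    {A : Matrix n m R} {B : Matrix m l R} (hA : Aᵀ * A = 1) (hB : Bᵀ * B = 1) :
    (A * B)ᵀ * (A * B) = 1 := by
  rw [transpose_mul, Matrix.mul_assoc, ← Matrix.mul_assoc Aᵀ, hA, Matrix.one_mul, hB]

theorem eq_mul_diagonal_mul_transpose_of_mulVec_eq [Fintype n] [DecidableEq n]
    {Q A : Matrix n n R} (hQ : Qᵀ * Q = 1) {d : n → R} (h : ∀ j, A *ᵥ Qᵀ j = d j • Qᵀ j) :
    A = Q * diagonal d * Qᵀ := by
  have hAQ : A * Q = Q * diagonal d := by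
    ext i j
    rw [mul_diagonal]
    simpa [mulVec, dotProduct, mul_apply, mul_comm] using congrFun (h j) i
  calc A = A * (Q * Qᵀ) := by rw [mul_eq_one_comm.1 hQ, mul_one]
    _ = Q * diagonal d * Qᵀ := by rw [← Matrix.mul_assoc, hAQ]

open Polynomial in
theorem charpoly_mul_diagonal_mul_transpose [Fintype n] [DecidableEq n] [DecidableEq m]
    {Q : Matrix n m R} (hQ : Qᵀ * Q = 1) (d : m → R) :
    Polynomial.X ^ Fintype.card m * (Q * diagonal d * Qᵀ).charpoly =
      Polynomial.X ^ Fintype.card n * ∏ i, (Polynomial.X - C (d i)) := by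
  rw [charpoly_mul_comm', ← Matrix.mul_assoc, hQ, Matrix.one_mul, charpoly_diagonal]

open Polynomial in
theorem prod_X_sub_C_mul_X_pow_eq_of_mul_diagonal_mul_transpose_eq [IsDomain R] [Fintype n]
    [Fintype l] [DecidableEq n] [DecidableEq m] [DecidableEq l] {Q : Matrix n m R}
    {U : Matrix n l R} (hQ : Qᵀ * Q = 1) (hU : Uᵀ * U = 1) {a : m → R} {b : l → R}
    (h : Q * diagonal a * Qᵀ = U * diagonal b * Uᵀ) :
    (∏ i, (Polynomial.X - C (a i))) * Polynomial.X ^ Fintype.card l =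
      (∏ j, (Polynomial.X - C (b j))) * Polynomial.X ^ Fintype.card m := by
  have ha := charpoly_mul_diagonal_mul_transpose hQ a
  have hb := charpoly_mul_diagonal_mul_transpose hU b
  rw [h] at ha
  refine mul_left_cancel₀ (pow_ne_zero (Fintype.card n) X_ne_zero) ?_
  linear_combination (-Polynomial.X ^ Fintype.card l) * ha + Polynomial.X ^ Fintype.card m * hb

end Matrix

theorem IsProjOnto.eq_mul_inv_mul_transpose {n m : Type*} [Fintype n] [Fintype m] [DecidableEq m]
    {P : Matrix n n ℝ} {B : Matrix n m ℝ} (hP : IsProjOnto P B) (hB : IsUnit (Bᵀ * B)) :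
    P = B * (Bᵀ * B)⁻¹ * Bᵀ := by
  obtain ⟨hsymm, hidem, hrange⟩ := hP
  set P₀ := B * (Bᵀ * B)⁻¹ * Bᵀ
  have hP₀B : P₀ * B = B := by
    simp only [P₀, Matrix.mul_assoc, nonsing_inv_mul _ ((isUnit_iff_isUnit_det _).1 hB),
      Matrix.mul_one]
  have hP₀symm : P₀ᵀ = P₀ := by
    simp only [P₀, transpose_mul, transpose_nonsing_inv, transpose_transpose, Matrix.mul_assoc]
  have hPB : P * B = B := mul_eq_of_range_le hidem hrange.ge
  have hP₀P : P₀ * P = P := mul_eq_of_range_le hP₀B hrange.le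
  calc P = Pᵀ := hsymm.eq.symm
    _ = (P₀ * P)ᵀ := by rw [hP₀P]
    _ = P * P₀ := by rw [transpose_mul, hsymm.eq, hP₀symm]
    _ = P₀ := by simp only [P₀, ← Matrix.mul_assoc, hPB]

theorem Nmat_transpose_mul_self {n ι : Type*} [Fintype n] [Fintype ι] {w : n → ℝ}
    (hw : ∀ x, 0 ≤ w x) (f : n → ι → ℝ) : (Nmat w f)ᵀ * Nmat w f = SigmaPhi w f := by
  ext i j
  simp only [mul_apply, transpose_apply, Nmat, SigmaPhi, of_apply]
  refine sum_congr rfl fun x _ => ?_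
  linear_combination (f x i * f x j) * Real.mul_self_sqrt (hw x)

theorem AbarN_mul_Nmat {n m ι : Type*} [Fintype n] [Fintype m] [DecidableEq n] [DecidableEq m]
    {wb : m → ℝ} {wc : m → n → ℝ} (hw : ∀ x, 0 < wX wb wc x) (φ : n → ι → ℝ) :
    AbarN wb wc * Nmat (wX wb wc) φ = Nmat wb (fbar wc φ) := by
  ext xb i
  rw [mul_apply]
  simp only [AbarN, mul_diagonal, diagonal_mul, Abar, Nmat, fbar, of_apply, mul_sum]
  refine sum_congr rfl fun x _ => ?_
  have hb : (√(wb xb))⁻¹ * wb xb = √(wb xb) := by rw [inv_mul_eq_div, Real.div_sqrt]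
  have hx : (√(wX wb wc x))⁻¹ * √(wX wb wc x) = 1 :=
    inv_mul_cancel₀ (Real.sqrt_pos.2 (hw x)).ne'
  linear_combination (wc xb x * φ x i * ((√(wX wb wc x))⁻¹ * √(wX wb wc x))) * hb +
    (√(wb xb) * wc xb x * φ x i) * hx

def matrixOfColumns {n R : Type*} (e : ℕ → n → R) (p : ℕ) : Matrix n (Fin p) R :=
  of fun a b => e (b + 1) a

theorem sum_Icc_one_eq_sum_fin {M : Type*} [AddCommMonoid M] (f : ℕ → M) (p : ℕ) :
    ∑ i ∈ Icc 1 p, f i = ∑ b : Fin p, f (b + 1) := by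
  rw [← Ico_add_one_right_eq_Icc, sum_Ico_eq_sum_range,
    Fin.sum_univ_eq_sum_range (fun j => f (j + 1))]
  simp [add_comm]

theorem Fin.val_add_one_mem_Icc {p : ℕ} (b : Fin p) : (b : ℕ) + 1 ∈ Icc 1 p :=
  mem_Icc.2 ⟨Nat.le_add_left 1 b, b.isLt⟩

theorem transpose_mul_matrixOfColumns_self {n R : Type*} [Fintype n] [Semiring R]
    {e : ℕ → n → R} {p : ℕ}
    (he : ∀ i ∈ Icc 1 p, ∀ j ∈ Icc 1 p, ∑ a, e i a * e j a = if i = j then 1 else 0) :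
    (matrixOfColumns e p)ᵀ * matrixOfColumns e p = 1 := by
  ext b c
  simp only [mul_apply, transpose_apply, matrixOfColumns, of_apply,
    he _ b.val_add_one_mem_Icc _ c.val_add_one_mem_Icc, one_apply, add_left_inj, Fin.val_inj]

theorem eq_matrixOfColumns_mul_diagonal_mul_transpose_of_mulVec_eq {R : Type*} [CommRing R]
    {p : ℕ} {A : Matrix (Fin p) (Fin p) R} {e : ℕ → Fin p → R} {μ : ℕ → R}
    (he : ∀ i ∈ Icc 1 p, ∀ j ∈ Icc 1 p, ∑ a, e i a * e j a = if i = j then 1 else 0)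
    (h : ∀ i ∈ Icc 1 p, A *ᵥ e i = μ i • e i) :
    A = matrixOfColumns e p * diagonal (fun b : Fin p => μ (b + 1)) * (matrixOfColumns e p)ᵀ :=
  eq_mul_diagonal_mul_transpose_of_mulVec_eq (transpose_mul_matrixOfColumns_self he)
    fun b => h (b + 1) b.val_add_one_mem_Icc

theorem eq_matrixOfColumns_mul_diagonal_mul_transpose {n l R : Type*} [Fintype n] [Fintype l]
    [CommRing R] {M : Matrix n l R} {p : ℕ} {s : ℕ → R} {u : ℕ → n → R} {v : ℕ → l → R}
    (h : ∀ x y, M x y = ∑ i ∈ Icc 1 p, s i * u i x * v i y) :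
    M = matrixOfColumns u p * diagonal (fun b : Fin p => s (b + 1)) * (matrixOfColumns v p)ᵀ := by
  ext x y
  rw [h, sum_Icc_one_eq_sum_fin, mul_apply]
  simp only [mul_diagonal, transpose_apply, matrixOfColumns, of_apply]
  exact sum_congr rfl fun b _ => by ring

theorem mul_transpose_self_eq_of_singular_value_decomposition {n l : Type*} [Fintype n]
    [Fintype l] {M : Matrix n l ℝ} {p : ℕ} {γ : ℕ → ℝ} {u : ℕ → n → ℝ} {v : ℕ → l → ℝ}
    (hγ : ∀ i, 0 ≤ γ i)
    (hv : ∀ i ∈ Icc 1 p, ∀ j ∈ Icc 1 p, ∑ y, v i y * v j y = if i = j then 1 else 0)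
    (h : ∀ x y, M x y = ∑ i ∈ Icc 1 p, √(γ i) * u i x * v i y) :
    M * Mᵀ =
      matrixOfColumns u p * diagonal (fun b : Fin p => γ (b + 1)) * (matrixOfColumns u p)ᵀ := by
  rw [eq_matrixOfColumns_mul_diagonal_mul_transpose h,
    mul_diagonal_mul_transpose_mul_transpose (transpose_mul_matrixOfColumns_self hv)]
  simp only [Real.mul_self_sqrt (hγ _)]

open Polynomial in
theorem eq_of_prod_X_sub_C_mul_X_pow_eq {K : Type*} [CommRing K] [IsDomain K] [LinearOrder K]
    {a b : ℕ → K} {p q : ℕ}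
    (ha : ∀ i j, 1 ≤ i → i ≤ j → j ≤ p → a j ≤ a i) (hb : ∀ i j, 1 ≤ i → i ≤ j → b j ≤ b i)
    (hb0 : ∀ i, 0 ≤ b i) (hbq : ∀ i, q < i → b i = 0)
    (h : (∏ i : Fin p, (Polynomial.X - C (a (i + 1)))) * Polynomial.X ^ q =
      (∏ i : Fin q, (Polynomial.X - C (b (i + 1)))) * Polynomial.X ^ p) :
    ∀ i ∈ Icc 1 p, a i = b i := by
  set F : ℕ → K := fun j => if j < p then a (j + 1) else 0
  set G : ℕ → K := fun j => b (j + 1)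
  have hprod : ∏ j ∈ range (p + q), (Polynomial.X - C (F j)) =
      ∏ j ∈ range (p + q), (Polynomial.X - C (G j)) := by
    rw [prod_range_add_X_sub_C_of_eq_zero (fun j hj => if_neg hj.not_gt), add_comm p q,
      prod_range_add_X_sub_C_of_eq_zero (fun j hj => hbq _ (Nat.lt_succ_of_le hj)), ← h]
    simp
  have hmap : (range (p + q)).val.map F = (range (p + q)).val.map G := by
    simpa only [roots_prod_X_sub_C_comp] using congrArg roots hprod
  have ha0 : ∀ j < p, 0 ≤ a (j + 1) := fun j hj => by
    obtain ⟨j', -, hj'⟩ := Multiset.mem_map.1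
      (hmap ▸ Multiset.mem_map_of_mem F (mem_range.2 (Nat.lt_add_right q hj)))
    have hFj : F j = a (j + 1) := if_pos hj
    rw [← hFj, ← hj']
    exact hb0 (j' + 1)
  have hF : Antitone F := fun i j hij => by
    simp only [F]
    split_ifs with hj hi hi
    · exact ha _ _ (by omega) (by omega) (by omega)
    · omega
    · exact ha0 i hi
    · rfl
  have hG : Antitone G := fun i j hij => hb _ _ (by omega) (by omega)
  intro i hi
  obtain ⟨hi1, hip⟩ := mem_Icc.1 hi
  simpa [F, G, show i - 1 < p by omega, Nat.sub_add_cancel hi1] using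
    hF.eq_of_map_range_eq hG hmap (j := i - 1) (by omega)

theorem eigenvalues_eq_one_sub_singular_general {D : ℕ}
    (wb : Xb → ℝ) (wc : Xb → X → ℝ)
    (hwb : ∀ xb, 0 < wb xb)
    (hwx : ∀ x, 0 < wX wb wc x)
    (φ : X → Fin D → ℝ) (hSigma : IsUnit (SigmaPhi (wX wb wc) φ))
    (R : Matrix (Fin D) (Fin D) ℝ) (hR : R.IsSymm)
    (hRR : R * R = (SigmaPhi (wX wb wc) φ)⁻¹)
    (P : Matrix X X ℝ) (hP : IsProjOnto P (Nmat (wX wb wc) φ))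
    (γ : ℕ → ℝ) (u : ℕ → X → ℝ) (v : ℕ → Xb → ℝ)
    (hγnonneg : ∀ i, 0 ≤ γ i)
    (hγmono : ∀ i j, 1 ≤ i → i ≤ j → γ j ≤ γ i)
    (hγpad : ∀ i, min (Fintype.card X) (Fintype.card Xb) < i → γ i = 0)
    (hu : ∀ i ∈ Finset.Icc 1 (min (Fintype.card X) (Fintype.card Xb)),
        ∀ j ∈ Finset.Icc 1 (min (Fintype.card X) (Fintype.card Xb)),
        ∑ x, u i x * u j x = if i = j then (1 : ℝ) else 0)
    (hv : ∀ i ∈ Finset.Icc 1 (Fintype.card Xb), ∀ j ∈ Finset.Icc 1 (Fintype.card Xb),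
        ∑ xb, v i xb * v j xb = if i = j then (1 : ℝ) else 0)
    (hsvd : ∀ x xb, (P * (AbarN wb wc)ᵀ) x xb
        = ∑ i ∈ Finset.Icc 1 (min (Fintype.card X) (Fintype.card Xb)),
            Real.sqrt (γ i) * u i x * v i xb)
    (lam : ℕ → ℝ) (e : ℕ → Fin D → ℝ)
    (he : ∀ i ∈ Finset.Icc 1 D, ∀ j ∈ Finset.Icc 1 D,
        ∑ a, e i a * e j a = if i = j then (1 : ℝ) else 0)
    (heig : ∀ i ∈ Finset.Icc 1 D,
        (1 - R * SigmaBar wb wc φ * R).mulVec (e i) = lam i • e i)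
    (hlammono : ∀ i j, 1 ≤ i → i ≤ j → j ≤ D → lam i ≤ lam j) :
    ∀ i ∈ Finset.Icc 1 D, lam i = 1 - γ i := by
  set k := min (Fintype.card X) (Fintype.card Xb)
  set Φ := Nmat (wX wb wc) φ
  set Ψ := Nmat wb (fbar wc φ)
  have hΦ : Φᵀ * Φ = SigmaPhi (wX wb wc) φ := Nmat_transpose_mul_self (fun x => (hwx x).le) φ
  have hΨ : Ψᵀ * Ψ = SigmaBar wb wc φ := Nmat_transpose_mul_self (fun xb => (hwb xb).le) _
  have hPA : P * (AbarN wb wc)ᵀ = Φ * (R * R) * Ψᵀ := by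
    rw [hP.eq_mul_inv_mul_transpose (hΦ ▸ hSigma), hΦ, ← hRR, Matrix.mul_assoc,
      ← transpose_mul, AbarN_mul_Nmat hwx]
  have hRΨR := eq_matrixOfColumns_mul_diagonal_mul_transpose_of_mulVec_eq he
    (A := R * (Ψᵀ * Ψ) * R) (μ := fun i => 1 - lam i) fun i hi => by
      rw [sub_smul, one_smul, ← heig i hi, sub_mulVec, one_mulVec, sub_sub_cancel, hΨ]
  have hQ := transpose_mul_self_mul_eq_one
    (transpose_mul_self_eq_one_of_mul_self_eq_inv hR (hΦ ▸ hSigma) (by rw [hΦ, hRR]))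
    (transpose_mul_matrixOfColumns_self he)
  have hGram := mul_transpose_self_eq_of_singular_value_decomposition hγnonneg
    (fun i hi j hj => hv i (Icc_subset_Icc_right (min_le_right _ _) hi) j
      (Icc_subset_Icc_right (min_le_right _ _) hj)) hsvd
  rw [hPA, mul_mul_self_mul_transpose_mul_transpose hR hRΨR] at hGram
  have hpoly := prod_X_sub_C_mul_X_pow_eq_of_mul_diagonal_mul_transpose_eq hQ
    (transpose_mul_matrixOfColumns_self hu) hGram
  rw [Fintype.card_fin, Fintype.card_fin] at hpoly
  intro i hi
  linarith [eq_of_prod_X_sub_C_mul_X_pow_eq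
    (fun i j hi hij hj => sub_le_sub_left (hlammono i j hi hij hj) 1) hγmono hγnonneg hγpad
    hpoly i hi]

/-- if `Σ(φ)` is invertible, the increasing eigenvalues `λ_i` of
`I_D − Σ(φ)^{-1/2} Σ(φ̄) Σ(φ)^{-1/2}` and the decreasing squared singular values `γ_i`
of `P_{Φ_n} Ā_nᵀ` satisfy `λ_i = 1 − γ_i` for `i ∈ {1,…,D}`.
Here `R` is a symmetric square root of `Σ(φ)⁻¹`, the `γ` are given via a singular value
decomposition of `P Ā_nᵀ` (padded by zeros), and the `λ` via an orthonormal
eigendecomposition. -/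
theorem eigenvalues_eq_one_sub_singular {D : ℕ} [Nonempty Xb] [Nonempty X]
    (wb : Xb → ℝ) (wc : Xb → X → ℝ)
    (hwb : ∀ xb, 0 < wb xb) (hwbsum : ∑ xb, wb xb = 1)
    (hwc : ∀ xb x, 0 ≤ wc xb x) (hwcsum : ∀ xb, ∑ x, wc xb x = 1)
    (hwx : ∀ x, 0 < wX wb wc x)
    (φ : X → Fin D → ℝ) (hSigma : IsUnit (SigmaPhi (wX wb wc) φ))
    (R : Matrix (Fin D) (Fin D) ℝ) (hR : R.IsSymm)
    (hRR : R * R = (SigmaPhi (wX wb wc) φ)⁻¹)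
    (P : Matrix X X ℝ) (hP : IsProjOnto P (Nmat (wX wb wc) φ))
    (γ : ℕ → ℝ) (u : ℕ → X → ℝ) (v : ℕ → Xb → ℝ)
    (hγnonneg : ∀ i, 0 ≤ γ i)
    (hγmono : ∀ i j, 1 ≤ i → i ≤ j → γ j ≤ γ i)
    (hγpad : ∀ i, min (Fintype.card X) (Fintype.card Xb) < i → γ i = 0)
    (hu : ∀ i ∈ Finset.Icc 1 (min (Fintype.card X) (Fintype.card Xb)),
        ∀ j ∈ Finset.Icc 1 (min (Fintype.card X) (Fintype.card Xb)),
        ∑ x, u i x * u j x = if i = j then (1 : ℝ) else 0)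
    (hv : ∀ i ∈ Finset.Icc 1 (Fintype.card Xb), ∀ j ∈ Finset.Icc 1 (Fintype.card Xb),
        ∑ xb, v i xb * v j xb = if i = j then (1 : ℝ) else 0)
    (hsvd : ∀ x xb, (P * (AbarN wb wc)ᵀ) x xb
        = ∑ i ∈ Finset.Icc 1 (min (Fintype.card X) (Fintype.card Xb)),
            Real.sqrt (γ i) * u i x * v i xb)
    (lam : ℕ → ℝ) (e : ℕ → Fin D → ℝ)
    (he : ∀ i ∈ Finset.Icc 1 D, ∀ j ∈ Finset.Icc 1 D,
        ∑ a, e i a * e j a = if i = j then (1 : ℝ) else 0)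
    (heig : ∀ i ∈ Finset.Icc 1 D,
        (1 - R * SigmaBar wb wc φ * R).mulVec (e i) = lam i • e i)
    (hlammono : ∀ i j, 1 ≤ i → i ≤ j → j ≤ D → lam i ≤ lam j) :
    ∀ i ∈ Finset.Icc 1 D, lam i = 1 - γ i :=
  eigenvalues_eq_one_sub_singular_general wb wc hwb hwx φ hSigma R hR hRR P hP γ u v hγnonneg hγmono
    hγpad hu hv hsvd lam e he heig hlammono
end
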